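/- arXiv:math/0312354 — 6 statements merged into one kernel-verified Lean document; each statement's English description precedes it below -/
import Mathlib

section
/- Let (n_1,…,n_k) be a k-tuple of positive integers. Then (n_1,…,n_k) is admissible and satisfies [n_1,…,n_k] = 0 if and only if (n_1,…,n_k) can be obtained from the 1-tuple (0) by a finite sequence of strict blowups. -/
/-- The continued fraction `[n_1, …, n_k] = n_1 - 1/(n_2 - 1/(… - 1/n_k))`,
computed by the backwards recursion `t_k = n_k`, `t_i = n_i - 1/t_{i+1}`. -/
def cf : List ℚ → ℚ
  | [] => 0
  | [a] => a
  | a :: b :: l => a - 1 / cf (b :: l)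

/-- The continued fraction of a tuple of integers. -/
def cfI (l : List ℤ) : ℚ := cf (l.map (fun n => (n : ℚ)))

/-- A tuple is admissible if every denominator `t_i`, `i = 2, …, k`, appearing in the
backwards recursion computing the continued fraction is positive, i.e. the continued
fraction of every nonempty proper suffix is positive. -/
def Admissible (l : List ℤ) : Prop :=
  ∀ t : List ℤ, t ≠ [] → t ≠ l → t <:+ l → 0 < cfI t

/-- Strict blowdown: delete an entry equal to `1` in position `s > 1` and decrease its
neighbours by one (the right neighbour being omitted when `s = k`). -/
inductive StrictBlowdown : List ℤ → List ℤ → Prop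
  | last (u : List ℤ) (a : ℤ) : StrictBlowdown (u ++ [a, 1]) (u ++ [a - 1])
  | mid (u : List ℤ) (a b : ℤ) (v : List ℤ) :
      StrictBlowdown (u ++ a :: 1 :: b :: v) (u ++ (a - 1) :: (b - 1) :: v)

/-- A strict blowup is the reverse of a strict blowdown. -/
def StrictBlowup (x y : List ℤ) : Prop := StrictBlowdown y x

lemma cf_cons (a : ℚ) {l : List ℚ} (h : l ≠ []) : cf (a :: l) = a - 1 / cf l := by
  cases l with
  | nil => exact absurd rfl h
  | cons b t => rfl

lemma cfI_cons (a : ℤ) {l : List ℤ} (h : l ≠ []) :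
    cfI (a :: l) = (a : ℚ) - 1 / cfI l := by
  have : l.map (fun n => (n : ℚ)) ≠ [] := by
    intro hm
    cases l with
    | nil => exact h rfl
    | cons a t => simp at hm
  simp only [cfI, List.map_cons]
  exact cf_cons _ this

lemma cfI_singleton (a : ℤ) : cfI [a] = (a : ℚ) := rfl

lemma cfI_append_congr (w : List ℤ) {s s' : List ℤ} (hs : s ≠ []) (hs' : s' ≠ [])
    (h : cfI s = cfI s') : cfI (w ++ s) = cfI (w ++ s') := by
  induction w with
  | nil => simpa using h
  | cons a w ih =>
    have h1 : w ++ s ≠ [] := by simp [hs]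
    have h2 : w ++ s' ≠ [] := by simp [hs']
    rw [List.cons_append, List.cons_append, cfI_cons a h1, cfI_cons a h2, ih]

lemma suffix_append_cases {t m : List ℤ} (u : List ℤ) (h : t <:+ u ++ m) :
    t <:+ m ∨ ∃ w, w <:+ u ∧ w ≠ [] ∧ t = w ++ m := by
  induction u with
  | nil => exact Or.inl (by simpa using h)
  | cons c u ih =>
    rw [List.cons_append, List.suffix_cons_iff] at h
    rcases h with rfl | h
    · exact Or.inr ⟨c :: u, List.suffix_refl _, by simp, rfl⟩
    · rcases ih h with h | ⟨w, hw, hne, rfl⟩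
      · exact Or.inl h
      · exact Or.inr ⟨w, hw.trans (List.suffix_cons c u), hne, rfl⟩

/-- `cfI ((b-1) :: v) = cfI (b :: v) - 1`. -/
lemma cfI_pred_cons (b : ℤ) (v : List ℤ) : cfI ((b - 1) :: v) = cfI (b :: v) - 1 := by
  cases v with
  | nil => simp [cfI_singleton]
  | cons c w =>
    rw [cfI_cons (b - 1) (l := c :: w) (by simp), cfI_cons b (l := c :: w) (by simp)]
    push_cast
    ring

/-- the key continued-fraction identity for mid blowdown. -/
lemma cfI_mid (a b : ℤ) (v : List ℤ) (hx0 : cfI (b :: v) ≠ 0) (hx1 : cfI (b :: v) ≠ 1) :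
    cfI (a :: 1 :: b :: v) = cfI ((a - 1) :: (b - 1) :: v) := by
  set x := cfI (b :: v) with hx
  have h1 : cfI (1 :: b :: v) = 1 - 1 / x := by
    rw [cfI_cons _ (by simp)]; norm_num; rfl
  have h2 : cfI ((b - 1) :: v) = x - 1 := by rw [cfI_pred_cons]
  rw [cfI_cons a (by simp), cfI_cons (a - 1) (by simp), h1, h2]
  have hne : 1 - 1 / x ≠ 0 := by
    intro h
    apply hx1
    field_simp at h
    linarith
  have hne2 : x - 1 ≠ 0 := sub_ne_zero.mpr hx1
  push_cast
  field_simp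
  ring

lemma cfI_last (a : ℤ) : cfI [a, 1] = cfI [a - 1] := by
  rw [cfI_cons a (by simp), cfI_singleton, cfI_singleton]
  push_cast; norm_num

/-- bundled property -/
def P (l : List ℤ) : Prop := Admissible l ∧ cfI l = 0

lemma blowdown_P {l' l : List ℤ} (h : StrictBlowdown l' l) : P l' ↔ P l := by
  induction h with
  | last u a =>
    have hcf : cfI (u ++ [a, 1]) = cfI (u ++ [a - 1]) :=
      cfI_append_congr u (by simp) (by simp) (cfI_last a)
    constructor
    · rintro ⟨hadm, hz⟩
      refine ⟨?_, by rw [← hcf]; exact hz⟩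
      intro t htne htl hts
      rcases suffix_append_cases u hts with hts | ⟨w, hw, hwne, rfl⟩
      · -- t <:+ [a-1], t ≠ [], so t = [a-1]
        have : t = [a - 1] := by
          rw [List.suffix_cons_iff] at hts
          rcases hts with rfl | hts
          · rfl
          · simp at hts; exact absurd hts htne
        subst this
        rcases eq_or_ne u [] with rfl | hu
        · simp at htl
        · have := hadm [a, 1] (by simp) (by
            intro hcontra
            have h1 := congrArg List.length hcontra
            rw [List.length_append] at h1
            simp at h1
            exact hu h1) ⟨u, rfl⟩
          rwa [cfI_last] at this
      · -- t = w ++ [a-1]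
        have hwu : w ≠ u := by
          intro h; subst h; exact htl rfl
        have hproper : w ++ [a, 1] ≠ u ++ [a, 1] := by
          intro h; exact hwu (List.append_cancel_right h)
        have hsuf : w ++ [a, 1] <:+ u ++ [a, 1] := by
          obtain ⟨p, rfl⟩ := hw; exact ⟨p, by simp⟩
        have := hadm _ (by simp) hproper hsuf
        rwa [cfI_append_congr w (by simp) (by simp) (cfI_last a)] at this
    · rintro ⟨hadm, hz⟩
      refine ⟨?_, by rw [hcf]; exact hz⟩
      intro t htne htl hts
      rcases suffix_append_cases u hts with hts | ⟨w, hw, hwne, rfl⟩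
      · -- t <:+ [a, 1] : t = [a,1] or t = [1]
        rw [List.suffix_cons_iff] at hts
        rcases hts with rfl | hts
        · rcases eq_or_ne u [] with rfl | hu
          · simp at htl
          · have := hadm [a - 1] (by simp) (by
              intro hcontra
              have h1 := congrArg List.length hcontra
              rw [List.length_append] at h1
              simp at h1
              exact hu h1) ⟨u, rfl⟩
            rwa [← cfI_last] at this
        · have : t = [1] := by
            rw [List.suffix_cons_iff] at hts
            rcases hts with rfl | hts
            · rfl
            · simp at hts; exact absurd hts htne
          subst this
          norm_num [cfI_singleton]
      · have hwu : w ≠ u := by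
          intro h; subst h; exact htl rfl
        have hproper : w ++ [a - 1] ≠ u ++ [a - 1] := by
          intro h; exact hwu (List.append_cancel_right h)
        have hsuf : w ++ [a - 1] <:+ u ++ [a - 1] := by
          obtain ⟨p, rfl⟩ := hw; exact ⟨p, by simp⟩
        have := hadm _ (by simp) hproper hsuf
        rwa [← cfI_append_congr w (by simp) (by simp) (cfI_last a)] at this
  | mid u a b v =>
    set x := cfI (b :: v) with hxdef
    have h1bv : cfI (1 :: b :: v) = 1 - 1 / x := by
      rw [cfI_cons _ (by simp)]; norm_num; rfl
    have hpred : cfI ((b - 1) :: v) = x - 1 := cfI_pred_cons b v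
    constructor
    · rintro ⟨hadm, hz⟩
      -- from admissibility of l' : x > 1
      have hxpos : 0 < x := hadm (b :: v) (by simp)
        (by intro h; have := congrArg List.length h; simp at this; omega)
        ⟨u ++ [a, 1], by simp⟩
      have h1pos : 0 < 1 - 1 / x := by
        have := hadm (1 :: b :: v) (by simp)
          (by intro h; have := congrArg List.length h; simp at this; omega)
          ⟨u ++ [a], by simp⟩
        rwa [h1bv] at this
      have hx1 : 1 < x := by
        by_contra hle
        push_neg at hle
        have : 1 / x ≥ 1 := by
          rw [ge_iff_le, le_div_iff₀ hxpos]; linarith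
        linarith
      have hmid : cfI (a :: 1 :: b :: v) = cfI ((a - 1) :: (b - 1) :: v) :=
        cfI_mid a b v (by linarith) (by linarith)
      have hcf : cfI (u ++ a :: 1 :: b :: v) = cfI (u ++ (a - 1) :: (b - 1) :: v) :=
        cfI_append_congr u (by simp) (by simp) hmid
      refine ⟨?_, by rw [← hcf]; exact hz⟩
      intro t htne htl hts
      rcases suffix_append_cases u hts with hts | ⟨w, hw, hwne, rfl⟩
      · rw [List.suffix_cons_iff] at hts
        rcases hts with rfl | hts
        · -- t = (a-1)::(b-1)::v
          rcases eq_or_ne u [] with rfl | hu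
          · simp at htl
          · have := hadm (a :: 1 :: b :: v) (by simp)
              (by
                intro hcontra
                have h1 := congrArg List.length hcontra
                rw [List.length_append] at h1
                simp at h1
                exact hu h1)
              ⟨u, rfl⟩
            rwa [hmid] at this
        · rw [List.suffix_cons_iff] at hts
          rcases hts with rfl | hts
          · -- t = (b-1)::v
            rw [hpred]; linarith
          · -- t <:+ v
            have hsuf : t <:+ u ++ a :: 1 :: b :: v :=
              hts.trans ⟨u ++ [a, 1, b], by simp⟩
            exact hadm t htne
              (by
                intro hcontra
                have h1 := congrArg List.length hcontra
                have h2 := List.IsSuffix.length_le hts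
                simp [List.length_append] at h1
                omega)
              hsuf
      · have hwu : w ≠ u := fun h => htl (by rw [h])
        have hproper : w ++ a :: 1 :: b :: v ≠ u ++ a :: 1 :: b :: v := by
          intro h; exact hwu (List.append_cancel_right h)
        have hsuf : w ++ a :: 1 :: b :: v <:+ u ++ a :: 1 :: b :: v := by
          obtain ⟨p, rfl⟩ := hw; exact ⟨p, by simp⟩
        have := hadm _ (by simp) hproper hsuf
        rwa [cfI_append_congr w (by simp) (by simp) hmid] at this
    · rintro ⟨hadm, hz⟩
      -- from admissibility of l : x - 1 > 0
      have hx1 : 1 < x := by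
        have := hadm ((b - 1) :: v) (by simp)
          (by intro h; have := congrArg List.length h; simp at this; omega)
          ⟨u ++ [a - 1], by simp⟩
        rw [hpred] at this; linarith
      have hmid : cfI (a :: 1 :: b :: v) = cfI ((a - 1) :: (b - 1) :: v) :=
        cfI_mid a b v (by linarith) (by linarith)
      have hcf : cfI (u ++ a :: 1 :: b :: v) = cfI (u ++ (a - 1) :: (b - 1) :: v) :=
        cfI_append_congr u (by simp) (by simp) hmid
      refine ⟨?_, by rw [hcf]; exact hz⟩
      intro t htne htl hts
      rcases suffix_append_cases u hts with hts | ⟨w, hw, hwne, rfl⟩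
      · rw [List.suffix_cons_iff] at hts
        rcases hts with rfl | hts
        · rcases eq_or_ne u [] with rfl | hu
          · simp at htl
          · have := hadm ((a - 1) :: (b - 1) :: v) (by simp)
              (by
                intro hcontra
                have h1 := congrArg List.length hcontra
                rw [List.length_append] at h1
                simp at h1
                exact hu h1)
              ⟨u, rfl⟩
            rwa [← hmid] at this
        · rw [List.suffix_cons_iff] at hts
          rcases hts with rfl | hts
          · rw [h1bv]
            have hxpos : (0:ℚ) < x := by linarith
            have : 1 / x < 1 := by rw [div_lt_one hxpos]; exact hx1
            linarith
          · rw [List.suffix_cons_iff] at hts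
            rcases hts with rfl | hts
            · linarith
            · have hsuf : t <:+ u ++ (a - 1) :: (b - 1) :: v :=
                hts.trans ⟨u ++ [a - 1, b - 1], by simp⟩
              exact hadm t htne
                (by
                  intro hcontra
                  have h1 := congrArg List.length hcontra
                  have h2 := List.IsSuffix.length_le hts
                  simp [List.length_append] at h1
                  omega)
                hsuf
      · have hwu : w ≠ u := fun h => htl (by rw [h])
        have hproper : w ++ (a-1) :: (b-1) :: v ≠ u ++ (a-1) :: (b-1) :: v := by
          intro h; exact hwu (List.append_cancel_right h)
        have hsuf : w ++ (a-1) :: (b-1) :: v <:+ u ++ (a-1) :: (b-1) :: v := by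
          obtain ⟨p, rfl⟩ := hw; exact ⟨p, by simp⟩
        have := hadm _ (by simp) hproper hsuf
        rwa [← cfI_append_congr w (by simp) (by simp) hmid] at this

lemma exists_one {l : List ℤ} (hP : P l) (hlen : 2 ≤ l.length) : ∃ x ∈ l.tail, x = 1 := by
  by_contra hno
  push_neg at hno
  obtain ⟨hadm, hz⟩ := hP
  cases l with
  | nil => simp at hlen
  | cons h tl =>
    have htl_ne : tl ≠ [] := by
      intro e; subst e; simp at hlen
    simp only [List.tail_cons] at hno
    have key : ∀ s : List ℤ, s <:+ tl → s ≠ [] → 1 < cfI s := by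
      intro s
      induction s with
      | nil => intro _ hc; exact absurd rfl hc
      | cons c s' ih =>
        intro hs _
        have hsl : c :: s' <:+ h :: tl := hs.trans (List.suffix_cons h tl)
        have hproper : c :: s' ≠ h :: tl := by
          intro e
          have h1 := congrArg List.length e
          have h2 := hs.length_le
          simp at h1 h2
          omega
        have hpos_s : 0 < cfI (c :: s') := hadm _ (by simp) hproper hsl
        have hc_mem : c ∈ tl := hs.mem (List.mem_cons_self)
        have hcne1 : c ≠ 1 := hno c hc_mem
        cases s' with
        | nil =>
          rw [cfI_singleton] at hpos_s ⊢
          have : 0 < c := by exact_mod_cast hpos_s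
          have : 2 ≤ c := by omega
          exact_mod_cast lt_of_lt_of_le one_lt_two (by exact_mod_cast this)
        | cons d w =>
          have hs' : d :: w <:+ tl := (List.suffix_cons c (d :: w)).trans hs
          have h1 : 1 < cfI (d :: w) := ih hs' (by simp)
          have hcf : cfI (c :: d :: w) = (c : ℚ) - 1 / cfI (d :: w) :=
            cfI_cons c (by simp)
          have hinv1 : 0 < 1 / cfI (d :: w) := by positivity
          have hinv2 : 1 / cfI (d :: w) < 1 := by
            rw [div_lt_one (by linarith)]; linarith
          have hcpos : (0 : ℚ) < (c : ℚ) := by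
            rw [hcf] at hpos_s; linarith
          have : 0 < c := by exact_mod_cast hcpos
          have hc2 : 2 ≤ c := by omega
          have hc2' : (2 : ℚ) ≤ (c : ℚ) := by exact_mod_cast hc2
          rw [hcf]; linarith
    have htlpos : 1 < cfI tl := key tl (List.suffix_refl tl) htl_ne
    have hcf : cfI (h :: tl) = (h : ℚ) - 1 / cfI tl := cfI_cons h htl_ne
    rw [hcf] at hz
    have hinv1 : 0 < 1 / cfI tl := by positivity
    have hinv2 : 1 / cfI tl < 1 := by
      rw [div_lt_one (by linarith)]; linarith
    have h1 : (0 : ℚ) < (h : ℚ) := by linarith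
    have h2 : (h : ℚ) < 1 := by linarith
    have h1' : 0 < h := by exact_mod_cast h1
    have h2' : h < 1 := by exact_mod_cast h2
    omega

lemma exists_blowdown {l : List ℤ} (hP : P l) (h2 : 2 ≤ l.length) :
    ∃ l₀, StrictBlowdown l l₀ ∧ l₀.length + 1 = l.length := by
  obtain ⟨x, hx, rfl⟩ := exists_one hP h2
  cases l with
  | nil => simp at h2
  | cons h tl =>
    simp only [List.tail_cons] at hx
    obtain ⟨p, q, rfl⟩ := List.append_of_mem hx
    obtain ⟨u, c, huc⟩ : ∃ u c, h :: p = u ++ [c] := by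
      rcases List.eq_nil_or_concat (h :: p) with he | ⟨u, c, he⟩
      · simp at he
      · exact ⟨u, c, by simpa using he⟩
    have hl : h :: (p ++ 1 :: q) = (u ++ [c]) ++ 1 :: q := by
      rw [← List.cons_append, huc]
    cases q with
    | nil =>
      refine ⟨u ++ [c - 1], ?_, ?_⟩
      · rw [hl]
        have := StrictBlowdown.last u c
        simpa using this
      · have := congrArg List.length huc
        simp at this ⊢
        omega
    | cons b v =>
      refine ⟨u ++ (c - 1) :: (b - 1) :: v, ?_, ?_⟩
      · rw [hl]
        have := StrictBlowdown.mid u c b v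
        simpa using this
      · have := congrArg List.length huc
        simp at this ⊢
        omega

lemma P_zero : P [0] := by
  constructor
  · intro t htne htl hts
    rw [List.suffix_cons_iff] at hts
    rcases hts with rfl | hts
    · exact absurd rfl htl
    · rw [List.suffix_nil] at hts
      exact absurd hts htne
  · rfl

lemma forward : ∀ n (l : List ℤ), l.length = n → l ≠ [] → P l →
    Relation.ReflTransGen StrictBlowup [0] l := by
  intro n
  induction n using Nat.strong_induction_on with
  | _ n ih =>
    intro l hlen hne hP
    rcases lt_or_ge l.length 2 with hsmall | h2
    · cases l with
      | nil => exact absurd rfl hne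
      | cons m t =>
        have : t = [] := by
          cases t with
          | nil => rfl
          | cons a b => exact absurd hsmall (by simp only [List.length_cons]; omega)
        subst this
        have hm : m = 0 := by
          have := hP.2
          rw [cfI_singleton] at this
          exact_mod_cast this
        subst hm
        exact Relation.ReflTransGen.refl
    · obtain ⟨l₀, hbd, hlen0⟩ := exists_blowdown hP h2
      have hP0 : P l₀ := (blowdown_P hbd).mp hP
      have hne0 : l₀ ≠ [] := by
        intro e; subst e; simp at hlen0; omega
      have hreach := ih l₀.length (by omega) l₀ rfl hne0 hP0
      exact hreach.tail hbd

/-- A tuple of positive integers is admissible with vanishing continued fraction if and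
only if it is obtained from the one-tuple `(0)` by a finite sequence of strict blowups. -/
theorem stmt0 (l : List ℤ) (hne : l ≠ []) (hpos : ∀ x ∈ l, 0 < x) :
    (Admissible l ∧ cfI l = 0) ↔ Relation.ReflTransGen StrictBlowup [0] l := by
  constructor
  · intro hPl
    exact forward l.length l rfl hne hPl
  · intro hreach
    clear hne hpos
    induction hreach with
    | refl => exact P_zero
    | tail _ hbc ih => exact (blowdown_P hbc).mpr ih
end

section
/- Let (n_1,…,n_k) be an admissible k-tuple of positive integers with [n_1,…,n_k] = 0. Then k ≥ 2 and there exists an index j with 2 ≤ j ≤ k such that n_j = 1. -/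
lemma cfI_gt_one : ∀ l : List ℤ, l ≠ [] → (∀ x ∈ l, 2 ≤ x) → 1 < cfI l := by
  intro l
  induction l with
  | nil => intro h; exact absurd rfl h
  | cons a t ih =>
    intro _ hb
    have ha : (2 : ℚ) ≤ (a : ℚ) := by exact_mod_cast hb a (by simp)
    cases t with
    | nil => simpa [cfI, cf] using lt_of_lt_of_le one_lt_two ha
    | cons b s =>
      have h1 : 1 < cfI (b :: s) := ih (by simp) (fun x hx => hb x (by simp [hx]))
      have h0 : (0:ℚ) < cfI (b :: s) := lt_trans one_pos h1
      have hinv : 1 / cfI (b :: s) < 1 := by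
        rw [div_lt_one h0]; exact h1
      have : cfI (a :: b :: s) = (a : ℚ) - 1 / cfI (b :: s) := by
        simp only [cfI, List.map_cons]; rfl
      rw [this]
      linarith

/-- If `(n_1, …, n_k)` is an admissible tuple of positive integers with
`[n_1, …, n_k] = 0`, then `k ≥ 2` and `n_j = 1` for some index `j` with `2 ≤ j ≤ k`
(in one-based indexing; below `j` is the corresponding zero-based index). -/
theorem stmt3 (l : List ℤ) (hne : l ≠ []) (hpos : ∀ x ∈ l, 0 < x)
    (hadm : Admissible l) (hcf : cfI l = 0) :
    2 ≤ l.length ∧ ∃ j : Fin l.length, 1 ≤ (j : ℕ) ∧ l.get j = 1 := by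
  obtain ⟨a, t, rfl⟩ := List.exists_cons_of_ne_nil hne
  have ha : (0:ℤ) < a := hpos a (by simp)
  -- first, the existence part
  have hex : ∃ j : Fin (a :: t).length, 1 ≤ (j : ℕ) ∧ (a :: t).get j = 1 := by
    by_contra hcon
    push_neg at hcon
    have ht1 : ∀ x ∈ t, x ≠ 1 := by
      intro x hx h1
      obtain ⟨i, hi⟩ := List.mem_iff_get.mp hx
      have hlt : i.1 + 1 < (a :: t).length := by simp
      exact hcon ⟨i.1 + 1, hlt⟩ (by simp)
        (by rw [show (a :: t).get ⟨i.1 + 1, hlt⟩ = t.get i from rfl, hi, h1])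
    have ht2 : ∀ x ∈ t, 2 ≤ x := by
      intro x hx
      have := hpos x (by simp [hx])
      have := ht1 x hx
      omega
    cases t with
    | nil =>
      have : cfI [a] = (a : ℚ) := by simp [cfI, cf]
      rw [this] at hcf
      exact absurd hcf (by positivity)
    | cons b s =>
      have h1 : 1 < cfI (b :: s) := cfI_gt_one _ (by simp) ht2
      have h0 : (0:ℚ) < cfI (b :: s) := lt_trans one_pos h1
      have hinv : 1 / cfI (b :: s) < 1 := by rw [div_lt_one h0]; exact h1
      have heq : cfI (a :: b :: s) = (a : ℚ) - 1 / cfI (b :: s) := by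
        simp only [cfI, List.map_cons]; rfl
      have haQ : (1:ℚ) ≤ (a : ℚ) := by exact_mod_cast ha
      rw [heq] at hcf
      linarith
  refine ⟨?_, hex⟩
  obtain ⟨j, hj1, _⟩ := hex
  have h2 := j.2
  simp only [List.length_cons] at h2 ⊢
  omega
end

section
/- Let k ≥ 3 and let (n_1,…,n_k) be an admissible k-tuple of positive integers with [n_1,…,n_k] = 0. Suppose there is exactly one index j ∈ {1,…,k} with n_j = 1. Then there exist coprime integers m and n such that [n_1,…,n_{j−1}, 2, n_{j+1},…,n_k] = m²/(mn+1). -/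
namespace Stmt7Aux

/-- The standard matrix of a continued-fraction entry. -/
def mA (n : ℤ) : Matrix (Fin 2) (Fin 2) ℤ := !![n, -1; 1, 0]

/-- Matrix of a tuple. -/
def Mt : List ℤ → Matrix (Fin 2) (Fin 2) ℤ
  | [] => 1
  | a :: l => mA a * Mt l

lemma Mt_cons (a : ℤ) (l : List ℤ) : Mt (a :: l) = mA a * Mt l := rfl

lemma Mt_append (x y : List ℤ) : Mt (x ++ y) = Mt x * Mt y := by
  induction x with
  | nil => simp [Mt]
  | cons a x ih => simp [Mt, ih, Matrix.mul_assoc]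

lemma Mt00 (a : ℤ) (l : List ℤ) : Mt (a :: l) 0 0 = a * Mt l 0 0 - Mt l 1 0 := by
  simp [Mt, mA, Matrix.mul_apply, Fin.sum_univ_two]
  ring

lemma Mt10 (a : ℤ) (l : List ℤ) : Mt (a :: l) 1 0 = Mt l 0 0 := by
  simp [Mt, mA, Matrix.mul_apply, Fin.sum_univ_two]

lemma Mt10' (l : List ℤ) (h : l ≠ []) : Mt l 1 0 = Mt l.tail 0 0 := by
  cases l with
  | nil => exact absurd rfl h
  | cons a l => simpa using Mt10 a l

lemma det_Mt (l : List ℤ) : (Mt l).det = 1 := by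
  induction l with
  | nil => simp [Mt]
  | cons a l ih =>
    rw [Mt_cons, Matrix.det_mul, ih, mul_one]
    simp [mA, Matrix.det_fin_two_of]

lemma cfI_singleton (a : ℤ) : cfI [a] = (a : ℚ) := rfl

lemma cfI_cons (a : ℤ) (l : List ℤ) (h : l ≠ []) :
    cfI (a :: l) = (a : ℚ) - 1 / cfI l := by
  cases l with
  | nil => exact absurd rfl h
  | cons b l => rfl

/-- Every nonempty suffix has positive continued fraction. -/
def Pos (l : List ℤ) : Prop := ∀ t, t <:+ l → t ≠ [] → 0 < cfI t

lemma Pos.tail {l : List ℤ} (h : Pos l) : Pos l.tail :=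
  fun t ht hne => h t (ht.trans (List.tail_suffix l)) hne

lemma both : ∀ (n : ℕ) (l : List ℤ), l.length ≤ n →
    (Pos l → 0 < Mt l 0 0) ∧
    (Pos l.tail → l ≠ [] → cfI l * ((Mt l.tail 0 0 : ℤ) : ℚ) = ((Mt l 0 0 : ℤ) : ℚ)) := by
  intro n
  induction n with
  | zero =>
    intro l hl
    have hnil : l = [] := List.length_eq_zero_iff.mp (Nat.le_zero.mp hl)
    subst hnil
    refine ⟨fun _ => ?_, fun _ h => absurd rfl h⟩
    norm_num [Mt, Matrix.one_apply]
  | succ n ih =>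
    intro l hl
    match l with
    | [] =>
      refine ⟨fun _ => ?_, fun _ h => absurd rfl h⟩
      norm_num [Mt, Matrix.one_apply]
    | [a] =>
      constructor
      · intro hp
        have h1 := hp [a] (List.suffix_refl _) (by simp)
        rw [cfI_singleton] at h1
        have ha : (0 : ℤ) < a := by exact_mod_cast h1
        have hM : Mt [a] 0 0 = a := by
          rw [Mt00]; norm_num [Mt, Matrix.one_apply]
        omega
      · intro _ _
        rw [cfI_singleton]
        have hM : Mt [a] 0 0 = a := by
          rw [Mt00]; norm_num [Mt, Matrix.one_apply]
        have hM' : Mt ([a] : List ℤ).tail 0 0 = 1 := by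
          norm_num [Mt, Matrix.one_apply]
        rw [hM, hM']
        push_cast
        ring
    | a :: b :: l'' =>
      have hlen' : (b :: l'').length ≤ n := by simp at hl ⊢; omega
      have hlen'' : l''.length ≤ n := by simp at hl ⊢; omega
      constructor
      · intro hp
        have hptail : Pos (b :: l'') := fun t ht hne =>
          hp t (ht.trans (List.suffix_cons a _)) hne
        have hu : 0 < Mt (b :: l'') 0 0 := (ih _ hlen').1 hptail
        have heq := (ih _ hlen').2 hptail.tail (by simp)
        have hcfpos : 0 < cfI (a :: b :: l'') :=
          hp _ (List.suffix_refl _) (by simp)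
        have heqa : cfI (a :: b :: l'') * ((Mt (b :: l'') 0 0 : ℤ) : ℚ)
            = ((Mt (a :: b :: l'') 0 0 : ℤ) : ℚ) := by
          have hv : 0 < Mt l'' 0 0 := (ih _ hlen'').1 hptail.tail
          have hvQ : ((Mt l'' 0 0 : ℤ) : ℚ) ≠ 0 := by
            exact_mod_cast hv.ne'
          have hcf' : 0 < cfI (b :: l'') := hptail _ (List.suffix_refl _) (by simp)
          have hcfval : cfI (b :: l'') = ((Mt (b :: l'') 0 0 : ℤ) : ℚ) / ((Mt l'' 0 0 : ℤ) : ℚ) := by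
            rw [eq_div_iff hvQ]
            simpa using heq
          rw [cfI_cons a (b :: l'') (by simp), hcfval]
          rw [Mt00 a (b :: l''), Mt10 b l'']
          push_cast
          field_simp
        have : (0 : ℚ) < ((Mt (a :: b :: l'') 0 0 : ℤ) : ℚ) := by
          rw [← heqa]
          have huQ : (0 : ℚ) < ((Mt (b :: l'') 0 0 : ℤ) : ℚ) := by exact_mod_cast hu
          positivity
        exact_mod_cast this
      · intro hptail _
        have hu : 0 < Mt (b :: l'') 0 0 := (ih _ hlen').1 hptail
        have heq := (ih _ hlen').2 hptail.tail (by simp)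
        have hv : 0 < Mt l'' 0 0 := (ih _ hlen'').1 hptail.tail
        have hvQ : ((Mt l'' 0 0 : ℤ) : ℚ) ≠ 0 := by exact_mod_cast hv.ne'
        have hcf' : 0 < cfI (b :: l'') := hptail _ (List.suffix_refl _) (by simp)
        have hcfval : cfI (b :: l'') = ((Mt (b :: l'') 0 0 : ℤ) : ℚ) / ((Mt l'' 0 0 : ℤ) : ℚ) := by
          rw [eq_div_iff hvQ]
          simpa using heq
        show cfI (a :: b :: l'') * ((Mt (b :: l'') 0 0 : ℤ) : ℚ)
            = ((Mt (a :: b :: l'') 0 0 : ℤ) : ℚ)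
        rw [cfI_cons a (b :: l'') (by simp), hcfval]
        rw [Mt00 a (b :: l''), Mt10 b l'']
        have huQ : ((Mt (b :: l'') 0 0 : ℤ) : ℚ) ≠ 0 := by
          exact_mod_cast hu.ne'
        push_cast
        field_simp

lemma good (l : List ℤ) (h : Pos l) : 0 < Mt l 0 0 :=
  (both l.length l le_rfl).1 h

lemma eqn (l : List ℤ) (h : Pos l.tail) (hne : l ≠ []) :
    cfI l * ((Mt l.tail 0 0 : ℤ) : ℚ) = ((Mt l 0 0 : ℤ) : ℚ) :=
  (both l.length l le_rfl).2 h hne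

lemma mono : ∀ (x B : List ℤ), Pos (x ++ 1 :: B) →
    Pos (x ++ 2 :: B) ∧ cfI (x ++ 1 :: B) ≤ cfI (x ++ 2 :: B) := by
  intro x
  induction x with
  | nil =>
    intro B h
    simp only [List.nil_append] at h ⊢
    have h1B : 0 < cfI (1 :: B) := h _ (List.suffix_refl _) (by simp)
    have key : cfI (2 :: B) = cfI (1 :: B) + 1 := by
      cases B with
      | nil => norm_num [cfI, cf]
      | cons b B' =>
        rw [cfI_cons 2 (b :: B') (by simp), cfI_cons 1 (b :: B') (by simp)]
        push_cast
        ring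
    constructor
    · intro t ht htne
      rcases List.suffix_cons_iff.mp ht with rfl | ht'
      · rw [key]; linarith
      · exact h t (ht'.trans (List.suffix_cons 1 B)) htne
    · rw [key]; linarith
  | cons y x ih =>
    intro B h
    simp only [List.cons_append] at h ⊢
    have hx : Pos (x ++ 1 :: B) := fun t ht htne =>
      h t (ht.trans (List.suffix_cons y _)) htne
    obtain ⟨hp2, hle⟩ := ih B hx
    have hpos1 : 0 < cfI (x ++ 1 :: B) := hx _ (List.suffix_refl _) (by simp)
    have hpos2 : 0 < cfI (x ++ 2 :: B) := hp2 _ (List.suffix_refl _) (by simp)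
    have hne1 : (x ++ 1 :: B) ≠ ([] : List ℤ) := by simp
    have hne2 : (x ++ 2 :: B) ≠ ([] : List ℤ) := by simp
    have e1 : cfI (y :: (x ++ 1 :: B)) = (y : ℚ) - 1 / cfI (x ++ 1 :: B) :=
      cfI_cons _ _ hne1
    have e2 : cfI (y :: (x ++ 2 :: B)) = (y : ℚ) - 1 / cfI (x ++ 2 :: B) :=
      cfI_cons _ _ hne2
    have hinv : 1 / cfI (x ++ 2 :: B) ≤ 1 / cfI (x ++ 1 :: B) :=
      one_div_le_one_div_of_le hpos1 hle
    have hle' : cfI (y :: (x ++ 1 :: B)) ≤ cfI (y :: (x ++ 2 :: B)) := by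
      rw [e1, e2]; linarith
    have hposy : 0 < cfI (y :: (x ++ 1 :: B)) :=
      h _ (List.suffix_refl _) (by simp)
    constructor
    · intro t ht htne
      rcases List.suffix_cons_iff.mp ht with rfl | ht'
      · linarith
      · exact hp2 t ht' htne
    · exact hle'

lemma twoLe : ∀ (A : List ℤ), (∀ x ∈ A, 2 ≤ x) →
    1 ≤ Mt A 0 0 ∧ Mt A 1 0 ≤ Mt A 0 0 ∧ 0 ≤ Mt A 1 0 := by
  intro A
  induction A with
  | nil => intro _; norm_num [Mt, Matrix.one_apply]
  | cons a A ih =>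
    intro h
    obtain ⟨h1, h2, h3⟩ := ih (fun x hx => h x (List.mem_cons_of_mem _ hx))
    have ha : 2 ≤ a := h a List.mem_cons_self
    refine ⟨?_, ?_, ?_⟩ <;> simp only [Mt00, Mt10] <;> nlinarith

lemma outer (P R : Matrix (Fin 2) (Fin 2) ℤ) (i : Fin 2) :
    (P * R) i 0 = P i 0 * R 0 0 + P i 1 * R 1 0 := by
  simp [Matrix.mul_apply, Fin.sum_univ_two]

lemma inner0 (Q : Matrix (Fin 2) (Fin 2) ℤ) (v : ℤ) :
    (mA v * Q) 0 0 = v * Q 0 0 - Q 1 0 := by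
  simp [mA, Matrix.mul_apply, Fin.sum_univ_two]; ring

lemma inner1 (Q : Matrix (Fin 2) (Fin 2) ℤ) (v : ℤ) :
    (mA v * Q) 1 0 = Q 0 0 := by
  simp [mA, Matrix.mul_apply, Fin.sum_univ_two]

lemma entry00 (P Q : Matrix (Fin 2) (Fin 2) ℤ) (v : ℤ) :
    (P * (mA v * Q)) 0 0 = P 0 0 * (v * Q 0 0 - Q 1 0) + P 0 1 * Q 0 0 := by
  rw [outer, inner0, inner1]

lemma entry10 (P Q : Matrix (Fin 2) (Fin 2) ℤ) (v : ℤ) :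
    (P * (mA v * Q)) 1 0 = P 1 0 * (v * Q 0 0 - Q 1 0) + P 1 1 * Q 0 0 := by
  rw [outer, inner0, inner1]

end Stmt7Aux

open Stmt7Aux in
/-- Let `k ≥ 3` and let `(n_1, …, n_k)` be an admissible `k`-tuple of positive integers
with `[n_1, …, n_k] = 0` having exactly one index `j` with `n_j = 1`.  Then there are
coprime integers `m` and `n` with
`[n_1, …, n_{j-1}, 2, n_{j+1}, …, n_k] = m² / (m·n + 1)`. -/
theorem stmt7 (l : List ℤ) (hk : 3 ≤ l.length) (hpos : ∀ x ∈ l, 0 < x)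
    (hadm : Admissible l) (hcf : cfI l = 0)
    (j : Fin l.length) (hj : l.get j = 1)
    (huniq : ∀ i : Fin l.length, l.get i = 1 → i = j) :
    ∃ m n : ℤ, IsCoprime m n ∧
      cfI (l.set (j : ℕ) 2) = ((m ^ 2 : ℤ) : ℚ) / ((m * n + 1 : ℤ) : ℚ) := by
  have hjlt : (j : ℕ) < l.length := j.isLt
  set A := l.take (j : ℕ) with hA
  set B := l.drop ((j : ℕ) + 1) with hB
  have hjget : l[(j : ℕ)] = 1 := by
    rw [← hj]; simp [List.get_eq_getElem]
  have hsplit : l = A ++ 1 :: B := by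
    conv_lhs => rw [← List.take_append_drop (j : ℕ) l]
    rw [List.drop_eq_getElem_cons hjlt, hjget]
  have hset : l.set (j : ℕ) 2 = A ++ 2 :: B :=
    List.set_eq_take_cons_drop 2 hjlt
  have hlne : l ≠ [] := by
    intro h; rw [h] at hk; simp at hk
  have hlpos : 0 < l.length := by omega
  -- Pos of l.tail
  have hPostail : Pos l.tail := by
    intro t ht htne
    have htl : t <:+ l := ht.trans (List.tail_suffix l)
    have htne' : t ≠ l := by
      intro h
      subst h
      have h1 := ht.length_le
      rw [List.length_tail] at h1
      omega
    exact hadm t htne htne' htl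
  -- N l = 0 and the denominator is 1
  have heql := eqn l hPostail hlne
  have hM00 : Mt l 0 0 = 0 := by
    rw [hcf, zero_mul] at heql
    exact_mod_cast heql.symm
  have hqpos : 0 < Mt l 1 0 := by
    rw [Mt10' l hlne]
    exact good _ hPostail
  have hdet : Mt l 0 0 * Mt l 1 1 - Mt l 0 1 * Mt l 1 0 = 1 := by
    rw [← Matrix.det_fin_two]; exact det_Mt l
  have hq1 : Mt l 1 0 = 1 := by
    refine Int.eq_one_of_dvd_one hqpos.le ⟨-(Mt l 0 1), ?_⟩
    rw [hM00] at hdet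
    linarith
  -- matrix pieces
  set P := Mt A with hP
  set Q := Mt B with hQ
  set a : ℤ := P 0 0 with ha
  set a' : ℤ := P 1 0 with ha'
  set b : ℤ := P 0 1 with hb
  set b' : ℤ := P 1 1 with hb'
  set c : ℤ := Q 0 0 with hc
  set d : ℤ := Q 0 1 with hd
  set f : ℤ := Q 1 0 with hf
  set e : ℤ := Q 1 1 with he
  have hMl : Mt l = P * (mA 1 * Q) := by
    conv_lhs => rw [hsplit]
    rw [Mt_append, Mt_cons]
  have h0 : a * (1 * c - f) + b * c = 0 := by
    rw [← entry00 P Q 1, ← hMl]; exact hM00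
  have h1 : a' * (1 * c - f) + b' * c = 1 := by
    rw [← entry10 P Q 1, ← hMl]; exact hq1
  have hdetP : a * b' - b * a' = 1 := by
    have := det_Mt A
    rw [Matrix.det_fin_two] at this
    exact this
  have hdetQ : c * e - d * f = 1 := by
    have := det_Mt B
    rw [Matrix.det_fin_two] at this
    exact this
  -- positivity of a
  have hA2 : ∀ x ∈ A, 2 ≤ x := by
    intro x hx
    rw [hA] at hx
    obtain ⟨i, hi, rfl⟩ := List.getElem_of_mem hx
    have hilen : i < (l.take (j : ℕ)).length := hi
    have hij : i < (j : ℕ) := by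
      rw [List.length_take] at hilen
      omega
    have hgt : (l.take (j : ℕ))[i] = l[i]'(by omega) := List.getElem_take
    have hne1 : l[i]'(by omega) ≠ 1 := by
      intro h
      have := huniq ⟨i, by omega⟩ (by simpa [List.get_eq_getElem] using h)
      have : i = (j : ℕ) := by simpa using congrArg Fin.val this
      omega
    have hposx : 0 < l[i]'(by omega) := hpos _ (List.getElem_mem _)
    rw [hgt]
    omega
  have ha1 : 1 ≤ a := (twoLe A hA2).1
  have hapos : 0 < a := by omega
  -- positivity of c
  have hPosB : Pos B := by
    intro t ht htne
    have htl : t <:+ l := ht.trans (by rw [hB]; exact List.drop_suffix _ l)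
    have htne' : t ≠ l := by
      intro h
      subst h
      have h1 := ht.length_le
      rw [hB, List.length_drop] at h1
      omega
    exact hadm t htne htne' htl
  have hcpos : 0 < c := good B hPosB
  -- a = c
  have hcop_ab : IsCoprime a b := ⟨b', -a', by linear_combination hdetP⟩
  have hcop_aab : IsCoprime a (a + b) := by
    have := hcop_ab.add_mul_left_right 1
    rwa [mul_one, add_comm b a] at this
  have hcop_cf : IsCoprime c f := ⟨e, -d, by linear_combination hdetQ⟩
  have hdvd_ac : a ∣ c := by
    refine hcop_aab.dvd_of_dvd_mul_right ⟨f, ?_⟩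
    linear_combination h0
  have hdvd_ca : c ∣ a := by
    refine hcop_cf.dvd_of_dvd_mul_right ⟨a + b, ?_⟩
    linear_combination -h0
  have hac : a = c := Int.dvd_antisymm hapos.le hcpos.le hdvd_ac hdvd_ca
  -- the modified list
  set l₂ : List ℤ := l.set (j : ℕ) 2 with hl₂
  have hl₂eq : l₂ = A ++ 2 :: B := hset
  have hMl₂ : Mt l₂ = P * (mA 2 * Q) := by
    rw [hl₂eq, Mt_append, Mt_cons]
  have hM₂00 : Mt l₂ 0 0 = a * c := by
    rw [hMl₂, entry00]
    linear_combination h0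
  have hM₂10 : Mt l₂ 1 0 = a' * c + 1 := by
    rw [hMl₂, entry10]
    linear_combination h1
  have hl₂ne : l₂ ≠ [] := by
    rw [hl₂eq]; simp
  -- Pos of l₂.tail
  have hPostail₂ : Pos l₂.tail := by
    rw [hl₂eq]
    cases hAc : A with
    | nil =>
      simpa using hPosB
    | cons y A' =>
      have hltail : l.tail = A' ++ 1 :: B := by
        rw [hsplit, hAc]
        simp
      have hPos1 : Pos (A' ++ 1 :: B) := by rw [← hltail]; exact hPostail
      have := (mono A' B hPos1).1
      simpa using this
  have heql₂ := eqn l₂ hPostail₂ hl₂ne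
  have hdentail : Mt l₂.tail 0 0 = Mt l₂ 1 0 := (Mt10' l₂ hl₂ne).symm
  have hdenpos : 0 < Mt l₂ 1 0 := by
    rw [← hdentail]
    exact good _ hPostail₂
  refine ⟨a, a', ⟨b', -b, by linear_combination hdetP⟩, ?_⟩
  have hden : Mt l₂ 1 0 = a * a' + 1 := by
    rw [hM₂10, hac]; ring
  have hnum : Mt l₂ 0 0 = a ^ 2 := by
    rw [hM₂00, hac]; ring
  have hdenQ : ((a * a' + 1 : ℤ) : ℚ) ≠ 0 := by
    have : (0 : ℤ) < a * a' + 1 := by rw [← hden]; exact hdenpos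
    exact_mod_cast this.ne'
  rw [eq_div_iff hdenQ]
  show cfI l₂ * ((a * a' + 1 : ℤ) : ℚ) = ((a ^ 2 : ℤ) : ℚ)
  rw [← hden, ← hnum, ← hdentail]
  exact heql₂
end

section
/- Let (n_1,…,n_k) be an admissible k-tuple of non-negative integers. Then for all indices 1 ≤ i ≤ j ≤ k, the tuple (n_i, n_{i+1},…,n_j) is admissible. -/
lemma cfI_cons_cons (a b : ℤ) (l : List ℤ) :
    cfI (a :: b :: l) = (a : ℚ) - 1 / cfI (b :: l) := rfl

/-- Key lemma: if every nonempty suffix of `m` has positive continued fraction, then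
every nonempty prefix `p` of `m` satisfies `cfI m ≤ cfI p`. -/
lemma cfI_prefix_ge (m : List ℤ)
    (hsuf : ∀ s : List ℤ, s ≠ [] → s <:+ m → 0 < cfI s) :
    ∀ p : List ℤ, p ≠ [] → p <+: m → cfI m ≤ cfI p := by
  induction m with
  | nil => intro p hp hpm; simp [List.prefix_nil] at hpm; exact absurd hpm hp
  | cons a rest ih =>
    intro p hp hpm
    obtain ⟨p', rfl⟩ : ∃ p', p = a :: p' := by
      rcases p with _ | ⟨x, p'⟩
      · exact absurd rfl hp
      · obtain ⟨rfl, -⟩ := List.cons_prefix_cons.mp hpm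
        exact ⟨p', rfl⟩
    have hp' : p' <+: rest := (List.cons_prefix_cons.mp hpm).2
    rcases p' with _ | ⟨b, p''⟩
    · -- p = [a]
      rcases rest with _ | ⟨c, rest'⟩
      · exact le_refl _
      · rw [cfI_singleton, cfI_cons_cons]
        have hpos : 0 < cfI (c :: rest') :=
          hsuf _ (by simp) (List.suffix_cons a _)
        have : 0 < 1 / cfI (c :: rest') := by positivity
        linarith
    · -- p = a :: b :: p''
      obtain ⟨rest', rfl⟩ : ∃ rest', rest = b :: rest' := by
        rcases rest with _ | ⟨c, rest'⟩
        · simp [List.prefix_nil] at hp'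
        · obtain ⟨rfl, -⟩ := List.cons_prefix_cons.mp hp'
          exact ⟨rest', rfl⟩
      have hsuf' : ∀ s : List ℤ, s ≠ [] → s <:+ (b :: rest') → 0 < cfI s :=
        fun s hs hsm => hsuf s hs (hsm.trans (List.suffix_cons a _))
      have hrest_pos : 0 < cfI (b :: rest') := hsuf' _ (by simp) List.suffix_rfl
      have hle : cfI (b :: rest') ≤ cfI (b :: p'') := ih hsuf' _ (by simp) hp'
      have hppos : 0 < cfI (b :: p'') := lt_of_lt_of_le hrest_pos hle
      rw [cfI_cons_cons, cfI_cons_cons]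
      have h1 : 1 / cfI (b :: p'') ≤ 1 / cfI (b :: rest') :=
        one_div_le_one_div_of_le hrest_pos hle
      linarith

/-- If `(n_1, …, n_k)` is an admissible tuple of non-negative integers, then every
nonempty contiguous subtuple `(n_i, …, n_j)` (`1 ≤ i ≤ j ≤ k`), i.e. every nonempty
infix, is admissible. -/
theorem stmt13 (l : List ℤ) (hnn : ∀ x ∈ l, 0 ≤ x) (hadm : Admissible l) :
    ∀ t : List ℤ, t ≠ [] → t <:+: l → Admissible t := by
  intro t ht htl w hw hwt hwsuf
  obtain ⟨S, htS, hSl⟩ := List.infix_iff_prefix_suffix.mp htl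
  obtain ⟨r, rfl⟩ := htS
  obtain ⟨x, rfl⟩ := hwsuf
  -- w ++ r is a suffix of S = (x ++ w) ++ r
  have huS : (w ++ r) <:+ ((x ++ w) ++ r) := ⟨x, by simp⟩
  have hul : (w ++ r) <:+ l := huS.trans hSl
  have hne : w ++ r ≠ l := by
    intro h
    have h1 : ((x ++ w) ++ r).length ≤ l.length := hSl.length_le
    have h2 : (w ++ r).length = l.length := by rw [h]
    have hx : x = [] := by
      apply List.eq_nil_of_length_eq_zero
      simp only [List.length_append] at h1 h2
      omega
    subst hx
    exact hwt (by simp)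
  have hsuf : ∀ s : List ℤ, s ≠ [] → s <:+ (w ++ r) → 0 < cfI s := by
    intro s hs hsu
    refine hadm s hs ?_ (hsu.trans hul)
    intro h
    rw [h] at hsu
    exact hne (hul.eq_of_length (le_antisymm hul.length_le hsu.length_le))
  have hwu : w <+: (w ++ r) := List.prefix_append w r
  have := cfI_prefix_ge (w ++ r) hsuf w hw hwu
  have hupos : 0 < cfI (w ++ r) := hsuf _ (by simp [hw]) List.suffix_rfl
  linarith
end

section
/- Let k ≥ 2 and b_1,…,b_k ≥ 1 be integers. In the lattice with orthogonal basis l, f_1,…,f_M (with ⟨l,l⟩ = 1, ⟨f_i,f_i⟩ = −1), let α_1 = l − e^1_1 − ⋯ − e^1_{b_1} and α_i = e^i_1 − e^i_2 − ⋯ − e^i_{b_i} for i = 2,…,k, where each e^i_j ∈ {f_1,…,f_M} and e^i_j ≠ e^i_{j'} whenever j ≠ j' (for the same i). Assume ⟨α_i, α_j⟩ = 1 whenever |i−j| = 1 and ⟨α_i, α_j⟩ = 0 whenever |i−j| > 1. Set A^1 = {e^1_1,…,e^1_{b_1}} and A^i = {e^i_2,…,e^i_{b_i}} for i = 2,…,k.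 Then for every j = 2,…,k there exists an index i with 1 ≤ i < j such that e^j_1 ∈ A^i; moreover, if e^j_1 ∈ A^i with i < j−1, then e^h_1 ∈ A^i ∩ A^j for some index h with i < h < j. -/
/-- The intersection form of `CP² # M C̄P²` on `ℤ^{M+1}`:
`⟨x, y⟩ = x₀·y₀ - Σ_{j=1}^M x_j·y_j`, so that the standard basis is an orthogonal basis
`l, f_1, …, f_M` with `⟨l,l⟩ = 1` and `⟨f_j,f_j⟩ = -1`. -/
def interForm (M : ℕ) (x y : Fin (M + 1) → ℤ) : ℤ :=
  x 0 * y 0 - ∑ j : Fin M, x j.succ * y j.succ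

/-- The basis vector `l`. -/
def lvec (M : ℕ) : Fin (M + 1) → ℤ := Pi.single 0 1

/-- The basis vector `f_j`, `j = 1, …, M`. -/
def fvec (M : ℕ) (j : Fin M) : Fin (M + 1) → ℤ := Pi.single j.succ 1


-- sum of fvecs over an injective family, coordinates
lemma sumf_succ (M : ℕ) (g : ℕ → Fin M) (s : Finset ℕ) (hg : Set.InjOn g s) (t : Fin M) :
    (∑ j ∈ s, fvec M (g j)) t.succ = if t ∈ s.image g then 1 else 0 := by
  rw [Finset.sum_apply]
  have : ∀ j ∈ s, fvec M (g j) t.succ = if t = g j then (1:ℤ) else 0 := by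
    intro j _
    simp [fvec, Pi.single_apply, Fin.succ_inj]
  rw [Finset.sum_congr rfl this,
    show (∑ j ∈ s, if t = g j then (1:ℤ) else 0) = ∑ x ∈ s.image g, if t = x then 1 else 0 from
      (Finset.sum_image (f := fun x => if t = x then (1:ℤ) else 0) (fun a ha b hb hab => hg ha hb hab)).symm,
    Finset.sum_ite_eq]

lemma sumf_zero (M : ℕ) (g : ℕ → Fin M) (s : Finset ℕ) :
    (∑ j ∈ s, fvec M (g j)) 0 = 0 := by
  rw [Finset.sum_apply]
  refine Finset.sum_eq_zero fun j _ => ?_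
  simp [fvec, Pi.single_apply, (Fin.succ_ne_zero (g j)).symm]

lemma lvec_succ (M : ℕ) (t : Fin M) : lvec M t.succ = 0 := by
  simp [lvec, Pi.single_apply, Fin.succ_ne_zero t]

lemma lvec_zero (M : ℕ) : lvec M 0 = 1 := by simp [lvec]

lemma fvec_zero (M : ℕ) (j : Fin M) : fvec M j 0 = 0 := by
  simp [fvec, Pi.single_apply, (Fin.succ_ne_zero j).symm]

lemma fvec_succ (M : ℕ) (j t : Fin M) : fvec M j t.succ = if t = j then 1 else 0 := by
  simp [fvec, Pi.single_apply, Fin.succ_inj]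

lemma sum_ind_ind (M : ℕ) (s u : Finset (Fin M)) :
    ∑ t : Fin M, (if t ∈ s then (1:ℤ) else 0) * (if t ∈ u then 1 else 0) = ((s ∩ u).card : ℤ) := by
  have h : ∀ t : Fin M, (if t ∈ s then (1:ℤ) else 0) * (if t ∈ u then 1 else 0)
      = if t ∈ s ∩ u then 1 else 0 := by
    intro t; by_cases hs : t ∈ s <;> by_cases hu : t ∈ u <;> simp [hs, hu]
  simp only [h]
  rw [Finset.sum_ite_mem, Finset.univ_inter, Finset.sum_const, nsmul_eq_mul, mul_one]

lemma sum_del_ind (M : ℕ) (a : Fin M) (u : Finset (Fin M)) :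
    ∑ t : Fin M, (if t = a then (1:ℤ) else 0) * (if t ∈ u then 1 else 0)
      = (if a ∈ u then 1 else 0) := by
  rw [Finset.sum_eq_single a] <;> simp +contextual

lemma sum_ind_del (M : ℕ) (a : Fin M) (u : Finset (Fin M)) :
    ∑ t : Fin M, (if t ∈ u then (1:ℤ) else 0) * (if t = a then 1 else 0)
      = (if a ∈ u then 1 else 0) := by
  rw [Finset.sum_eq_single a] <;> simp +contextual

lemma sum_del_del (M : ℕ) (a c : Fin M) :
    ∑ t : Fin M, (if t = a then (1:ℤ) else 0) * (if t = c then 1 else 0)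
      = (if a = c then 1 else 0) := by
  rw [Finset.sum_eq_single a] <;> simp +contextual

section rels
variable {M k : ℕ} (b : Fin (k + 2) → ℕ) (E : Fin (k + 2) → ℕ → Fin M)

/-- the `Finset` version of `A i`. -/
def Afin (b : Fin (k + 2) → ℕ) (E : Fin (k + 2) → ℕ → Fin M) (i : Fin (k + 2)) :
    Finset (Fin M) :=
  if i = 0 then (Finset.range (b 0)).image (E 0) else (Finset.Ico 1 (b i)).image (E i)

variable (hb : ∀ i, 1 ≤ b i)
  (hinj : ∀ i : Fin (k + 2), ∀ j j' : ℕ, j < b i → j' < b i → E i j = E i j' → j = j')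
  (α : Fin (k + 2) → Fin (M + 1) → ℤ)
  (hα0 : α 0 = lvec M - ∑ j ∈ Finset.range (b 0), fvec M (E 0 j))
  (hαi : ∀ i : Fin (k + 2), i ≠ 0 →
      α i = fvec M (E i 0) - ∑ j ∈ Finset.Ico 1 (b i), fvec M (E i j))

include hinj hα0 in
lemma rel0 (r : Fin (k + 2)) (hr : r ≠ 0)
    (hαr : α r = fvec M (E r 0) - ∑ j ∈ Finset.Ico 1 (b r), fvec M (E r j)) :
    interForm M (α 0) (α r)
      = (if E r 0 ∈ Afin b E 0 then 1 else 0) - ((Afin b E 0 ∩ Afin b E r).card : ℤ) := by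
  have inj0 : Set.InjOn (E 0) (Finset.range (b 0)) := by
    intro a ha c hc h
    exact hinj 0 a c (Finset.mem_range.mp ha) (Finset.mem_range.mp hc) h
  have injr : Set.InjOn (E r) (Finset.Ico 1 (b r)) := by
    intro a ha c hc h
    have ha' := Finset.mem_Ico.mp ha; have hc' := Finset.mem_Ico.mp hc
    exact hinj r a c ha'.2 hc'.2 h
  have hA0 : Afin b E 0 = (Finset.range (b 0)).image (E 0) := by simp [Afin]
  have hAr : Afin b E r = (Finset.Ico 1 (b r)).image (E r) := by simp [Afin, hr]
  rw [interForm, hα0, hαr]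
  have hc : ∀ t : Fin M,
      ((lvec M - ∑ j ∈ Finset.range (b 0), fvec M (E 0 j)) t.succ)
        * ((fvec M (E r 0) - ∑ j ∈ Finset.Ico 1 (b r), fvec M (E r j)) t.succ)
      = -((if t ∈ Afin b E 0 then (1:ℤ) else 0) * (if t = E r 0 then 1 else 0))
        + (if t ∈ Afin b E 0 then (1:ℤ) else 0) * (if t ∈ Afin b E r then 1 else 0) := by
    intro t
    rw [Pi.sub_apply, Pi.sub_apply, lvec_succ, fvec_succ, sumf_succ M (E 0) _ inj0,
      sumf_succ M (E r) _ injr, ← hA0, ← hAr]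
    ring
  rw [Finset.sum_congr rfl fun t _ => hc t]
  rw [Finset.sum_add_distrib, Finset.sum_neg_distrib, sum_ind_del, sum_ind_ind]
  simp only [Pi.sub_apply, lvec_zero, fvec_zero, sumf_zero]
  ring

include hinj in
lemma relqr (q r : Fin (k + 2)) (hq : q ≠ 0) (hr : r ≠ 0)
    (hαq : α q = fvec M (E q 0) - ∑ j ∈ Finset.Ico 1 (b q), fvec M (E q j))
    (hαr : α r = fvec M (E r 0) - ∑ j ∈ Finset.Ico 1 (b r), fvec M (E r j)) :
    interForm M (α q) (α r)
      = -(if E q 0 = E r 0 then 1 else 0)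
        + (if E q 0 ∈ Afin b E r then 1 else 0) + (if E r 0 ∈ Afin b E q then 1 else 0)
        - ((Afin b E q ∩ Afin b E r).card : ℤ) := by
  have injq : Set.InjOn (E q) (Finset.Ico 1 (b q)) := by
    intro a ha c hc h
    exact hinj q a c (Finset.mem_Ico.mp ha).2 (Finset.mem_Ico.mp hc).2 h
  have injr : Set.InjOn (E r) (Finset.Ico 1 (b r)) := by
    intro a ha c hc h
    exact hinj r a c (Finset.mem_Ico.mp ha).2 (Finset.mem_Ico.mp hc).2 h
  have hAq : Afin b E q = (Finset.Ico 1 (b q)).image (E q) := by simp [Afin, hq]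
  have hAr : Afin b E r = (Finset.Ico 1 (b r)).image (E r) := by simp [Afin, hr]
  rw [interForm, hαq, hαr]
  have hc : ∀ t : Fin M,
      ((fvec M (E q 0) - ∑ j ∈ Finset.Ico 1 (b q), fvec M (E q j)) t.succ)
        * ((fvec M (E r 0) - ∑ j ∈ Finset.Ico 1 (b r), fvec M (E r j)) t.succ)
      = (if t = E q 0 then (1:ℤ) else 0) * (if t = E r 0 then 1 else 0)
        + -((if t = E q 0 then (1:ℤ) else 0) * (if t ∈ Afin b E r then 1 else 0))
        + -((if t ∈ Afin b E q then (1:ℤ) else 0) * (if t = E r 0 then 1 else 0))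
        + (if t ∈ Afin b E q then (1:ℤ) else 0) * (if t ∈ Afin b E r then 1 else 0) := by
    intro t
    rw [Pi.sub_apply, Pi.sub_apply, fvec_succ, fvec_succ, sumf_succ M (E q) _ injq,
      sumf_succ M (E r) _ injr, ← hAq, ← hAr]
    ring
  rw [Finset.sum_congr rfl fun t _ => hc t]
  rw [Finset.sum_add_distrib, Finset.sum_add_distrib, Finset.sum_add_distrib,
    Finset.sum_neg_distrib, Finset.sum_neg_distrib, sum_del_del, sum_del_ind,
    sum_ind_del, sum_ind_ind]
  simp only [Pi.sub_apply, fvec_zero, sumf_zero]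
  ring

end rels


lemma master {M : ℕ} (n : ℕ) (head : ℕ → Fin M) (A : ℕ → Finset (Fin M))
    (hd : ∀ q r, 1 ≤ q → q < r → r < n → head q ≠ head r)
    (hrel : ∀ q r, q < r → r < n →
      (if 1 ≤ q ∧ head q ∈ A r then (1:ℤ) else 0) + (if head r ∈ A q then 1 else 0)
        - ((A q ∩ A r).card : ℤ) = (if q + 1 = r then 1 else 0)) :
    ∀ r, 1 ≤ r → r < n →
      ((∃ i, i < r ∧ head r ∈ A i) ∧
       (∀ i i', i < r → i' < r → head r ∈ A i → head r ∈ A i' → i = i') ∧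
       (∀ u, u < r → ∀ x, x ∈ A u ∩ A r →
          ∃ q, u < q ∧ q < r ∧ 1 ≤ q ∧ head q = x ∧ head q ∈ A u ∧ head q ∈ A r)) := by
  intro r
  induction r using Nat.strong_induction_on with
  | _ r IH =>
  intro hr1 hrn
  -- uniqueness
  have uniq : ∀ i i', i < r → i' < r → head r ∈ A i → head r ∈ A i' → i = i' := by
    have key : ∀ i i', i < i' → i' < r → head r ∈ A i → head r ∈ A i' → False := by
      intro i i' hii' hi'r hmi hmi'
      have hi'1 : 1 ≤ i' := Nat.one_le_iff_ne_zero.mpr (by omega)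
      obtain ⟨-, -, ex⟩ := IH i' hi'r hi'1 (lt_trans hi'r hrn)
      obtain ⟨q, hq1, hq2, hq3, hq4, -, -⟩ :=
        ex i hii' (head r) (Finset.mem_inter.mpr ⟨hmi, hmi'⟩)
      exact hd q r hq3 (lt_trans hq2 hi'r) hrn hq4
    intro i i' hi hi' hmi hmi'
    rcases lt_trichotomy i i' with h | h | h
    · exact absurd (key i i' h hi' hmi hmi') (by simp)
    · exact h
    · exact absurd (key i' i h hi hmi' hmi) (by simp)
  -- the sets D and E
  set Dr : Finset ℕ := (Finset.range r).filter (fun q => 1 ≤ q ∧ head q ∈ A r) with hDr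
  set Er : Finset ℕ := (Finset.range r).filter (fun q => head r ∈ A q) with hEr
  -- summing all relations
  have hsum : (Dr.card : ℤ) + (Er.card : ℤ)
      - ∑ q ∈ Finset.range r, ((A q ∩ A r).card : ℤ) = 1 := by
    have h1 : ∑ q ∈ Finset.range r, (if q + 1 = r then (1:ℤ) else 0) = 1 := by
      have hr' : r - 1 + 1 = r := by omega
      rw [Finset.sum_eq_single (r - 1)]
      · simp [hr']
      · intro q hq hne
        have : q + 1 ≠ r := by
          intro h; exact hne (by omega)
        simp [this]
      · intro h
        exact absurd (Finset.mem_range.mpr (by omega)) h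
    have h2 : ∑ q ∈ Finset.range r,
        ((if 1 ≤ q ∧ head q ∈ A r then (1:ℤ) else 0) + (if head r ∈ A q then 1 else 0)
          - ((A q ∩ A r).card : ℤ)) = 1 := by
      rw [Finset.sum_congr rfl fun q hq => hrel q r (Finset.mem_range.mp hq) hrn, h1]
    rw [← h2, Finset.sum_sub_distrib, Finset.sum_add_distrib]
    congr 1
    congr 1
    · rw [Finset.sum_boole, hDr]
    · rw [Finset.sum_boole, hEr]
  -- parent function for elements of Dr
  have hpar : ∀ q, ∃ u, q ∈ Dr → (u < q ∧ head q ∈ A u) := by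
    intro q
    by_cases hq : q ∈ Dr
    · have hmem := Finset.mem_filter.mp hq
      have hqr : q < r := Finset.mem_range.mp hmem.1
      obtain ⟨⟨u, hu1, hu2⟩, -, -⟩ := IH q hqr hmem.2.1 (lt_trans hqr hrn)
      exact ⟨u, fun _ => ⟨hu1, hu2⟩⟩
    · exact ⟨0, fun h => absurd h hq⟩
  choose psi hpsi using hpar
  -- fiberwise counting
  have hfib : Dr.card = ∑ u ∈ Finset.range r, (Dr.filter (fun q => psi q = u)).card := by
    apply Finset.card_eq_sum_card_fiberwise
    intro q hq
    have h1 := (hpsi q hq).1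
    have h2 : q < r := Finset.mem_range.mp (Finset.mem_filter.mp hq).1
    exact Finset.mem_range.mpr (lt_trans h1 h2)
  have hinjD : ∀ q ∈ Dr, ∀ q' ∈ Dr, head q = head q' → q = q' := by
    intro q hq q' hq' hh
    have h1 := Finset.mem_filter.mp hq
    have h2 := Finset.mem_filter.mp hq'
    by_contra hne
    rcases lt_or_gt_of_ne hne with h | h
    · exact hd q q' h1.2.1 h (lt_trans (Finset.mem_range.mp h2.1) hrn) hh
    · exact hd q' q h2.2.1 h (lt_trans (Finset.mem_range.mp h1.1) hrn) hh.symm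
  have hsubfib : ∀ u, ((Dr.filter (fun q => psi q = u)).image head) ⊆ A u ∩ A r := by
    intro u x hx
    obtain ⟨q, hq, rfl⟩ := Finset.mem_image.mp hx
    have hqD : q ∈ Dr := (Finset.mem_filter.mp hq).1
    have hpsiq := (Finset.mem_filter.mp hq).2
    have := (hpsi q hqD).2
    rw [hpsiq] at this
    exact Finset.mem_inter.mpr ⟨this, (Finset.mem_filter.mp hqD).2.2⟩
  have hfible : ∀ u, (Dr.filter (fun q => psi q = u)).card ≤ (A u ∩ A r).card := by
    intro u
    calc (Dr.filter (fun q => psi q = u)).card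
        = ((Dr.filter (fun q => psi q = u)).image head).card := by
          rw [Finset.card_image_of_injOn]
          intro a ha b hb hab
          exact hinjD a (Finset.mem_of_mem_filter a ha) b (Finset.mem_of_mem_filter b hb) hab
      _ ≤ (A u ∩ A r).card := Finset.card_le_card (hsubfib u)
  have hDle : (Dr.card : ℤ) ≤ ∑ q ∈ Finset.range r, ((A q ∩ A r).card : ℤ) := by
    rw [hfib]
    push_cast
    exact Finset.sum_le_sum fun u _ => by exact_mod_cast hfible u
  -- Er has exactly one element
  have hEr1 : Er.card = 1 := by
    have hle : Er.card ≤ 1 := by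
      apply Finset.card_le_one.mpr
      intro a ha b hb
      have ha' := Finset.mem_filter.mp ha
      have hb' := Finset.mem_filter.mp hb
      exact uniq a b (Finset.mem_range.mp ha'.1) (Finset.mem_range.mp hb'.1) ha'.2 hb'.2
    have hge : (1 : ℤ) ≤ Er.card := by omega
    omega
  -- existence
  have hex : ∃ i, i < r ∧ head r ∈ A i := by
    have : Er.Nonempty := Finset.card_pos.mp (by omega)
    obtain ⟨i, hi⟩ := this
    have hi' := Finset.mem_filter.mp hi
    exact ⟨i, Finset.mem_range.mp hi'.1, hi'.2⟩
  -- exactness: sum of cards equals Dr.card, so each fiber is everything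
  have hsum2 : ∑ q ∈ Finset.range r, ((A q ∩ A r).card : ℤ) = Dr.card := by omega
  have hfibeq : ∀ u ∈ Finset.range r,
      ((Dr.filter (fun q => psi q = u)).card : ℤ) = ((A u ∩ A r).card : ℤ) := by
    have h1 : ∑ u ∈ Finset.range r, ((Dr.filter (fun q => psi q = u)).card : ℤ)
        = ∑ u ∈ Finset.range r, ((A u ∩ A r).card : ℤ) := by
      rw [hsum2, hfib]
      exact (Nat.cast_sum _ _).symm
    intro u hu
    exact (Finset.sum_eq_sum_iff_of_le
      (fun i _ => by exact_mod_cast hfible i)).mp h1 u hu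
  refine ⟨hex, uniq, ?_⟩
  intro u hur x hx
  have himg : (Dr.filter (fun q => psi q = u)).image head = A u ∩ A r := by
    apply Finset.eq_of_subset_of_card_le (hsubfib u)
    have := hfibeq u (Finset.mem_range.mpr hur)
    rw [Finset.card_image_of_injOn (fun a ha b hb hab =>
      hinjD a (Finset.mem_of_mem_filter a ha) b (Finset.mem_of_mem_filter b hb) hab)]
    omega
  rw [← himg] at hx
  obtain ⟨q, hq, rfl⟩ := Finset.mem_image.mp hx
  have hqD : q ∈ Dr := (Finset.mem_of_mem_filter q hq)
  have hmem := Finset.mem_filter.mp hqD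
  have hpsiq : psi q = u := (Finset.mem_filter.mp hq).2
  have hpq := hpsi q hqD
  refine ⟨q, ?_, Finset.mem_range.mp hmem.1, hmem.2.1, rfl, ?_, hmem.2.2⟩
  · rw [← hpsiq]; exact hpq.1
  · rw [← hpsiq]; exact hpq.2


/-- Lemma on strings of homology classes (part 1).  Here the string has length
`k + 2 ≥ 2`; indices are zero-based, so `α 0` is `α_1 = l - e^1_1 - ⋯ - e^1_{b_1}` and
for `i ≠ 0` the class `α i` is `α_i = e^i_1 - e^i_2 - ⋯ - e^i_{b_i}`, with
`e^i_j = E i (j-1) ∈ {f_1, …, f_M}`, distinct for distinct `j` and the same `i`.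
Assuming `⟨α_i, α_j⟩ = 1` for `|i-j| = 1` and `⟨α_i, α_j⟩ = 0` for `|i-j| > 1`, and with
`A^1 = {e^1_1, …, e^1_{b_1}}`, `A^i = {e^i_2, …, e^i_{b_i}}` for `i ≠ 1`:
for every `j ≥ 2` there is `i < j` with `e^j_1 ∈ A^i`; moreover if `e^j_1 ∈ A^i` with
`i < j - 1`, then `e^h_1 ∈ A^i ∩ A^j` for some `h` with `i < h < j`. -/
theorem stmt14 (M k : ℕ) (b : Fin (k + 2) → ℕ) (hb : ∀ i, 1 ≤ b i)
    (E : Fin (k + 2) → ℕ → Fin M)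
    (hinj : ∀ i : Fin (k + 2), ∀ j j' : ℕ, j < b i → j' < b i → E i j = E i j' → j = j')
    (α : Fin (k + 2) → Fin (M + 1) → ℤ)
    (hα0 : α 0 = lvec M - ∑ j ∈ Finset.range (b 0), fvec M (E 0 j))
    (hαi : ∀ i : Fin (k + 2), i ≠ 0 →
      α i = fvec M (E i 0) - ∑ j ∈ Finset.Ico 1 (b i), fvec M (E i j))
    (hadj : ∀ i i' : Fin (k + 2), ((i : ℕ) + 1 = (i' : ℕ) ∨ (i' : ℕ) + 1 = (i : ℕ)) →
      interForm M (α i) (α i') = 1)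
    (hfar : ∀ i i' : Fin (k + 2), ((i : ℕ) + 1 < (i' : ℕ) ∨ (i' : ℕ) + 1 < (i : ℕ)) →
      interForm M (α i) (α i') = 0)
    (A : Fin (k + 2) → Set (Fin M))
    (hA0 : A 0 = {x | ∃ j : ℕ, j < b 0 ∧ E 0 j = x})
    (hAi : ∀ i : Fin (k + 2), i ≠ 0 → A i = {x | ∃ j : ℕ, 1 ≤ j ∧ j < b i ∧ E i j = x}) :
    ∀ jj : Fin (k + 2), jj ≠ 0 →
      (∃ i : Fin (k + 2), i < jj ∧ E jj 0 ∈ A i) ∧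
      (∀ i : Fin (k + 2), (i : ℕ) + 1 < (jj : ℕ) → E jj 0 ∈ A i →
        ∃ h : Fin (k + 2), i < h ∧ h < jj ∧ E h 0 ∈ A i ∧ E h 0 ∈ A jj) := by
  classical
  -- membership translation between the Set-valued A and the Finset Afin
  have memA : ∀ i : Fin (k + 2), ∀ x : Fin M, x ∈ A i ↔ x ∈ Afin b E i := by
    intro i x
    by_cases hi : i = 0
    · subst hi
      rw [hA0]
      have h0 : Afin b E 0 = (Finset.range (b 0)).image (E 0) := by simp [Afin]
      rw [h0]
      simp only [Finset.mem_image, Finset.mem_range, Set.mem_setOf_eq] <;> tauto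
    · rw [hAi i hi]
      have h0 : Afin b E i = (Finset.Ico 1 (b i)).image (E i) := by simp [Afin, hi]
      rw [h0]
      simp only [Finset.mem_image, Finset.mem_Ico, Set.mem_setOf_eq] <;> tauto
  -- heads are not in their own tails
  have hnt : ∀ i : Fin (k + 2), i ≠ 0 → E i 0 ∉ Afin b E i := by
    intro i hi hmem
    rw [Afin, if_neg hi, Finset.mem_image] at hmem
    obtain ⟨j, hj, hje⟩ := hmem
    rw [Finset.mem_Ico] at hj
    have := hinj i j 0 hj.2 (hb i) hje
    omega
  -- heads of distinct classes are distinct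
  have hd : ∀ q r : Fin (k + 2), q ≠ 0 → r ≠ 0 → q ≠ r → E q 0 ≠ E r 0 := by
    intro q r hq hr hqr heq
    have hval : interForm M (α q) (α r) = 0 ∨ interForm M (α q) (α r) = 1 := by
      have hne : (q : ℕ) ≠ (r : ℕ) := fun h => hqr (Fin.ext h)
      rcases Nat.lt_or_ge ((q : ℕ) + 1) (r : ℕ) with h | h
      · exact Or.inl (hfar q r (Or.inl h))
      · rcases Nat.lt_or_ge ((r : ℕ) + 1) (q : ℕ) with h' | h'
        · exact Or.inl (hfar q r (Or.inr h'))
        · refine Or.inr (hadj q r ?_)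
          omega
    rw [relqr b E hinj α q r hq hr (hαi q hq) (hαi r hr)] at hval
    rw [if_pos heq, heq, if_neg (hnt r hr), ← heq, if_neg (hnt q hq)] at hval
    have : (0 : ℤ) ≤ ((Afin b E q ∩ Afin b E r).card : ℤ) := Int.natCast_nonneg _
    omega
  -- ℕ-indexed versions
  set headN : ℕ → Fin M := fun q => if hq : q < k + 2 then E ⟨q, hq⟩ 0 else E 0 0 with hheadN
  set AN : ℕ → Finset (Fin M) := fun q =>
    if hq : q < k + 2 then Afin b E ⟨q, hq⟩ else ∅ with hAN
  have headN_eq : ∀ (q : ℕ) (hq : q < k + 2), headN q = E ⟨q, hq⟩ 0 := by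
    intro q hq; simp only [hheadN]; rw [dif_pos hq]
  have AN_eq : ∀ (q : ℕ) (hq : q < k + 2), AN q = Afin b E ⟨q, hq⟩ := by
    intro q hq; simp only [hAN]; rw [dif_pos hq]
  have hdN : ∀ q r : ℕ, 1 ≤ q → q < r → r < k + 2 → headN q ≠ headN r := by
    intro q r h1 h2 h3
    have hq : q < k + 2 := lt_trans h2 h3
    rw [headN_eq q hq, headN_eq r h3]
    exact hd ⟨q, hq⟩ ⟨r, h3⟩ (by simp [Fin.ext_iff]; omega) (by simp [Fin.ext_iff]; omega)
      (by simp [Fin.ext_iff]; omega)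
  have hrelN : ∀ q r : ℕ, q < r → r < k + 2 →
      (if 1 ≤ q ∧ headN q ∈ AN r then (1:ℤ) else 0) + (if headN r ∈ AN q then 1 else 0)
        - ((AN q ∩ AN r).card : ℤ) = (if q + 1 = r then 1 else 0) := by
    intro q r hqr hrk
    have hqk : q < k + 2 := lt_trans hqr hrk
    have hrF0 : (⟨r, hrk⟩ : Fin (k + 2)) ≠ 0 := by simp [Fin.ext_iff]; omega
    have hIF : interForm M (α ⟨q, hqk⟩) (α ⟨r, hrk⟩) = (if q + 1 = r then 1 else 0) := by
      by_cases h : q + 1 = r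
      · rw [if_pos h]; exact hadj _ _ (Or.inl h)
      · rw [if_neg h]
        refine hfar _ _ (Or.inl ?_)
        show q + 1 < r
        omega
    rw [headN_eq q hqk, headN_eq r hrk, AN_eq q hqk, AN_eq r hrk]
    by_cases hq0 : q = 0
    · subst hq0
      have h0 : (⟨0, hqk⟩ : Fin (k + 2)) = 0 := rfl
      rw [h0] at hIF ⊢
      rw [rel0 b E hinj α hα0 ⟨r, hrk⟩ hrF0 (hαi _ hrF0)] at hIF
      rw [if_neg (by simp : ¬(1 ≤ 0 ∧ E (0 : Fin (k + 2)) 0 ∈ Afin b E ⟨r, hrk⟩))]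
      linarith [hIF]
    · have hqF0 : (⟨q, hqk⟩ : Fin (k + 2)) ≠ 0 := by simp [Fin.ext_iff]; omega
      rw [relqr b E hinj α ⟨q, hqk⟩ ⟨r, hrk⟩ hqF0 hrF0 (hαi _ hqF0) (hαi _ hrF0)] at hIF
      rw [if_neg (hd ⟨q, hqk⟩ ⟨r, hrk⟩ hqF0 hrF0 (by simp [Fin.ext_iff]; omega))] at hIF
      have hand : (if 1 ≤ q ∧ E (⟨q, hqk⟩ : Fin (k + 2)) 0 ∈ Afin b E ⟨r, hrk⟩ then (1:ℤ) else 0)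
          = (if E (⟨q, hqk⟩ : Fin (k + 2)) 0 ∈ Afin b E ⟨r, hrk⟩ then (1:ℤ) else 0) := by
        by_cases hP : E (⟨q, hqk⟩ : Fin (k + 2)) 0 ∈ Afin b E ⟨r, hrk⟩
        · rw [if_pos hP, if_pos ⟨by omega, hP⟩]
        · rw [if_neg hP, if_neg (by tauto)]
      rw [hand]
      linarith [hIF]
  have hm := master (k + 2) headN AN hdN hrelN
  intro jj hjj
  have hj1 : 1 ≤ (jj : ℕ) := by
    rcases Nat.eq_zero_or_pos (jj : ℕ) with h | h
    · exact absurd (Fin.ext h) hjj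
    · exact h
  obtain ⟨⟨i, hi, hmemi⟩, -, hexact⟩ := hm (jj : ℕ) hj1 jj.isLt
  constructor
  · refine ⟨⟨i, lt_trans hi jj.isLt⟩, ?_, ?_⟩
    · exact hi
    · rw [memA]
      rw [headN_eq (jj : ℕ) jj.isLt, AN_eq i (lt_trans hi jj.isLt)] at hmemi
      rwa [Fin.eta] at hmemi
  · intro i' hi1 hmem
    have hmem' : headN (jj : ℕ) ∈ AN (i' : ℕ) := by
      rw [headN_eq (jj : ℕ) jj.isLt, AN_eq (i' : ℕ) i'.isLt, Fin.eta, Fin.eta]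
      exact (memA i' (E jj 0)).mp hmem
    have heq := hrelN (i' : ℕ) (jj : ℕ) (by omega) jj.isLt
    rw [if_pos hmem', if_neg (by omega : ¬((i' : ℕ) + 1 = (jj : ℕ)))] at heq
    have hcard : 0 < (AN (i' : ℕ) ∩ AN (jj : ℕ)).card := by
      by_cases hP : 1 ≤ (i' : ℕ) ∧ headN (i' : ℕ) ∈ AN (jj : ℕ)
      · rw [if_pos hP] at heq; omega
      · rw [if_neg hP] at heq; omega
    obtain ⟨x, hx⟩ := Finset.card_pos.mp hcard
    obtain ⟨qn, hq1, hq2, hq3, hq4, hq5, hq6⟩ := hexact (i' : ℕ) (by omega) x hx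
    have hqk : qn < k + 2 := lt_trans hq2 jj.isLt
    refine ⟨⟨qn, hqk⟩, hq1, hq2, ?_, ?_⟩
    · rw [memA]
      rw [headN_eq qn hqk, AN_eq (i' : ℕ) i'.isLt, Fin.eta] at hq5
      exact hq5
    · rw [memA]
      rw [headN_eq qn hqk, AN_eq (jj : ℕ) jj.isLt, Fin.eta] at hq6
      exact hq6
end

section
/- Let k ≥ 2 and b_1,…,b_k ≥ 1 be integers. In the lattice with orthogonal basis l, f_1,…,f_M (with ⟨l,l⟩ = 1, ⟨f_i,f_i⟩ = −1), let α_1 = l − e^1_1 − ⋯ − e^1_{b_1} and α_i = e^i_1 − e^i_2 − ⋯ − e^i_{b_i} for i = 2,…,k, where each e^i_j ∈ {f_1,…,f_M} and e^i_j ≠ e^i_{j'} whenever j ≠ j' (for the same i). Assume ⟨α_i, α_j⟩ = 1 whenever |i−j| = 1 and ⟨α_i, α_j⟩ = 0 whenever |i−j| > 1. Set A^1 = {e^1_1,…,e^1_{b_1}} and A^i = {e^i_2,…,e^i_{b_i}} for i = 2,…,k. Then for all 1 ≤ i < j ≤ k, A^i ∩ A^j ⊆ {e^2_1, e^3_1,…,e^k_1}.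 -/
/-- Sum of an indicator over a set where the function is injective. -/
lemma sum_ite_one {ι β : Type*} [DecidableEq β] (s : Finset ι) (g : ι → β)
    (hg : ∀ j ∈ s, ∀ j' ∈ s, g j = g j' → j = j') (f : β) :
    ∑ j ∈ s, (if g j = f then (1 : ℤ) else 0) = if ∃ j ∈ s, g j = f then 1 else 0 := by
  by_cases h : ∃ j ∈ s, g j = f
  · obtain ⟨j0, hj0, hgj0⟩ := h
    rw [if_pos ⟨j0, hj0, hgj0⟩, Finset.sum_eq_single_of_mem j0 hj0 ?_, if_pos hgj0]
    intro j hj hne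
    exact if_neg fun hgj => hne (hg j hj j0 hj0 (hgj.trans hgj0.symm))
  · rw [if_neg h, Finset.sum_eq_zero]
    intro j hj
    exact if_neg fun hgj => h ⟨j, hj, hgj⟩

open Classical in
/-- Head indicator: `1` iff `a ≠ 0` and `f` is the head `E a 0` of the row `a`. -/
noncomputable def Phead {M : ℕ} (k : ℕ) (E : Fin (k + 2) → ℕ → Fin M)
    (a : Fin (k + 2)) (f : Fin M) : ℤ :=
  if a = 0 then 0 else if E a 0 = f then 1 else 0

open Classical in
/-- Tail indicator: `1` iff `f` occurs among the negative entries of the row `a`. -/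
noncomputable def Ntail {M : ℕ} (k : ℕ) (b : Fin (k + 2) → ℕ) (E : Fin (k + 2) → ℕ → Fin M)
    (a : Fin (k + 2)) (f : Fin M) : ℤ :=
  if a = 0 then (if ∃ j, j < b 0 ∧ E 0 j = f then 1 else 0)
  else if ∃ j, 1 ≤ j ∧ j < b a ∧ E a j = f then 1 else 0

set_option maxHeartbeats 1600000 in
/-- Lemma on strings of homology classes (part 2).  Here the string has length
`k + 2 ≥ 2`; indices are zero-based, so `α 0` is `α_1 = l - e^1_1 - ⋯ - e^1_{b_1}` and
for `i ≠ 0` the class `α i` is `α_i = e^i_1 - e^i_2 - ⋯ - e^i_{b_i}`, with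
`e^i_j = E i (j-1) ∈ {f_1, …, f_M}`, distinct for distinct `j` and the same `i`.
Assuming `⟨α_i, α_j⟩ = 1` for `|i-j| = 1` and `⟨α_i, α_j⟩ = 0` for `|i-j| > 1`, and with
`A^1 = {e^1_1, …, e^1_{b_1}}`, `A^i = {e^i_2, …, e^i_{b_i}}` for `i ≠ 1`:
for all `i < j` one has `A^i ∩ A^j ⊆ {e^2_1, e^3_1, …, e^k_1}`. -/
theorem stmt15 (M k : ℕ) (b : Fin (k + 2) → ℕ) (hb : ∀ i, 1 ≤ b i)
    (E : Fin (k + 2) → ℕ → Fin M)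
    (hinj : ∀ i : Fin (k + 2), ∀ j j' : ℕ, j < b i → j' < b i → E i j = E i j' → j = j')
    (α : Fin (k + 2) → Fin (M + 1) → ℤ)
    (hα0 : α 0 = lvec M - ∑ j ∈ Finset.range (b 0), fvec M (E 0 j))
    (hαi : ∀ i : Fin (k + 2), i ≠ 0 →
      α i = fvec M (E i 0) - ∑ j ∈ Finset.Ico 1 (b i), fvec M (E i j))
    (hadj : ∀ i i' : Fin (k + 2), ((i : ℕ) + 1 = (i' : ℕ) ∨ (i' : ℕ) + 1 = (i : ℕ)) →
      interForm M (α i) (α i') = 1)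
    (hfar : ∀ i i' : Fin (k + 2), ((i : ℕ) + 1 < (i' : ℕ) ∨ (i' : ℕ) + 1 < (i : ℕ)) →
      interForm M (α i) (α i') = 0)
    (A : Fin (k + 2) → Set (Fin M))
    (hA0 : A 0 = {x | ∃ j : ℕ, j < b 0 ∧ E 0 j = x})
    (hAi : ∀ i : Fin (k + 2), i ≠ 0 → A i = {x | ∃ j : ℕ, 1 ≤ j ∧ j < b i ∧ E i j = x}) :
    ∀ i j : Fin (k + 2), i < j →
      A i ∩ A j ⊆ {x | ∃ h : Fin (k + 2), h ≠ 0 ∧ E h 0 = x} := by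
  classical
  set P : Fin (k + 2) → Fin M → ℤ := Phead k E with hPdef
  set N : Fin (k + 2) → Fin M → ℤ := Ntail k b E with hNdef
  -- the `l`-coefficient of each α
  set L : Fin (k + 2) → ℤ := fun a => if a = 0 then 1 else 0 with hLdef
  -- coefficient extraction at coordinate 0
  have hzero : ∀ a : Fin (k + 2), α a 0 = L a := by
    intro a
    by_cases ha : a = 0
    · subst ha
      rw [hα0]
      simp only [Pi.sub_apply, Finset.sum_apply, lvec, fvec, hLdef, if_pos rfl]
      rw [Pi.single_eq_same, Finset.sum_eq_zero, sub_zero]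
      intro j _
      exact Pi.single_eq_of_ne (Fin.succ_ne_zero _).symm _
    · rw [hαi a ha]
      simp only [Pi.sub_apply, Finset.sum_apply, fvec, hLdef, if_neg ha]
      rw [Pi.single_eq_of_ne (Fin.succ_ne_zero _).symm, Finset.sum_eq_zero, sub_zero]
      intro j _
      exact Pi.single_eq_of_ne (Fin.succ_ne_zero _).symm _
  -- coefficient extraction at coordinates `f.succ`
  have hcoef : ∀ (a : Fin (k + 2)) (f : Fin M), α a f.succ = P a f - N a f := by
    intro a f
    have hsingle : ∀ (y : Fin M), (fvec M y) f.succ = if y = f then (1 : ℤ) else 0 := by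
      intro y
      rw [fvec, Pi.single_apply]
      exact if_congr ⟨fun h => (Fin.succ_inj.mp h).symm, fun h => by rw [h]⟩ rfl rfl
    by_cases ha : a = 0
    · subst ha
      rw [hα0]
      simp only [Pi.sub_apply, Finset.sum_apply, lvec]
      rw [Pi.single_eq_of_ne (Fin.succ_ne_zero _), Finset.sum_congr rfl
        (fun j _ => hsingle (E 0 j)),
        sum_ite_one _ _ (fun j hj j' hj' hE => hinj 0 j j' (Finset.mem_range.mp hj)
          (Finset.mem_range.mp hj') hE) f]
      simp only [hPdef, hNdef, Phead, Ntail, if_true]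
      congr 1
      exact if_congr (by simp [Finset.mem_range]) rfl rfl
    · rw [hαi a ha]
      simp only [Pi.sub_apply, Finset.sum_apply]
      rw [hsingle (E a 0), Finset.sum_congr rfl (fun j _ => hsingle (E a j)),
        sum_ite_one _ _ (fun j hj j' hj' hE => hinj a j j' (Finset.mem_Ico.mp hj).2
          (Finset.mem_Ico.mp hj').2 hE) f]
      simp only [hPdef, hNdef, Phead, Ntail]
      rw [if_neg ha, if_neg ha]
      congr 1
      exact if_congr (by simp [Finset.mem_Ico, and_assoc]) rfl rfl
  -- the form in terms of coefficients
  have hform : ∀ a a' : Fin (k + 2), interForm M (α a) (α a') =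
      L a * L a' - ∑ f : Fin M, (P a f - N a f) * (P a' f - N a' f) := by
    intro a a'
    rw [interForm, hzero, hzero]
    congr 1
    exact Finset.sum_congr rfl fun f _ => by rw [hcoef, hcoef]
  -- basic facts about P and N
  have hP01 : ∀ a f, P a f = 0 ∨ P a f = 1 := by
    intro a f
    simp only [hPdef, Phead]
    split_ifs <;> simp
  have hN01 : ∀ a f, N a f = 0 ∨ N a f = 1 := by
    intro a f
    simp only [hNdef, Ntail]
    split_ifs <;> simp
  have hPN : ∀ a f, P a f * N a f = 0 := by
    intro a f
    simp only [hPdef, hNdef, Phead, Ntail]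
    by_cases ha : a = 0
    · rw [if_pos ha]; ring
    rw [if_neg ha, if_neg ha]
    by_cases h1 : E a 0 = f
    · rw [if_pos h1]
      rw [if_neg, mul_zero]
      rintro ⟨j, hj1, hj2, hj3⟩
      have := hinj a 0 j (hb a) hj2 (h1.trans hj3.symm)
      omega
    · rw [if_neg h1, zero_mul]
  have hsq : ∀ a f, (P a f - N a f) * (P a f - N a f) = P a f + N a f := by
    intro a f
    have hpn := hPN a f
    rcases hP01 a f with h | h <;> rcases hN01 a f with h' | h'
    · rw [h, h']; ring
    · rw [h, h']; ring
    · rw [h, h']; ring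
    · exfalso
      rw [h, h'] at hpn
      norm_num at hpn
  -- the double sum of the form
  set S : ℤ := ∑ a : Fin (k + 2), ∑ a' : Fin (k + 2), interForm M (α a) (α a') with hSdef
  have hsumL : ∑ a : Fin (k + 2), L a = 1 := by
    rw [hLdef]
    simp
  -- first evaluation of S : via coefficients
  have hS1 : S = 1 - ∑ f : Fin M, (∑ a : Fin (k + 2), (P a f - N a f)) ^ 2 := by
    rw [hSdef]
    rw [Finset.sum_congr rfl fun a _ => Finset.sum_congr rfl fun a' _ => hform a a']
    simp only [Finset.sum_sub_distrib]
    rw [← Finset.sum_mul_sum, hsumL, one_mul]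
    congr 1
    have step1 : ∀ a : Fin (k + 2),
        ∑ a' : Fin (k + 2), ∑ f : Fin M, (P a f - N a f) * (P a' f - N a' f) =
        ∑ f : Fin M, (P a f - N a f) * ∑ a' : Fin (k + 2), (P a' f - N a' f) := by
      intro a
      rw [Finset.sum_comm]
      exact Finset.sum_congr rfl fun f _ => (Finset.mul_sum _ _ _).symm
    rw [Finset.sum_congr rfl fun a _ => step1 a, Finset.sum_comm]
    refine Finset.sum_congr rfl fun f _ => ?_
    rw [← Finset.sum_mul, sq]
    simp only [Finset.sum_sub_distrib]
  -- second evaluation of S : via the hypotheses hadj/hfar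
  have hv : ∀ a a' : Fin (k + 2), interForm M (α a) (α a') =
      (if a = a' then interForm M (α a) (α a) else 0) +
      (if (a : ℕ) + 1 = (a' : ℕ) then 1 else 0) +
      (if (a' : ℕ) + 1 = (a : ℕ) then 1 else 0) := by
    intro a a'
    by_cases h1 : a = a'
    · subst h1
      have hne : ¬((a : ℕ) + 1 = (a : ℕ)) := by omega
      simp [hne]
    · have hval : (a : ℕ) ≠ (a' : ℕ) := fun h => h1 (Fin.ext h)
      rw [if_neg h1]
      by_cases h2 : (a : ℕ) + 1 = (a' : ℕ)
      · rw [hadj a a' (Or.inl h2), if_pos h2, if_neg (by omega)]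
        norm_num
      · by_cases h3 : (a' : ℕ) + 1 = (a : ℕ)
        · rw [hadj a a' (Or.inr h3), if_neg h2, if_pos h3]
          norm_num
        · rw [hfar a a' (by omega), if_neg h2, if_neg h3]
          norm_num
  have hcount : ∀ a : Fin (k + 2),
      (∑ a' : Fin (k + 2), if (a : ℕ) + 1 = (a' : ℕ) then (1 : ℤ) else 0) =
      if (a : ℕ) < k + 1 then 1 else 0 := by
    intro a
    by_cases h : (a : ℕ) < k + 1
    · rw [if_pos h,
        Finset.sum_eq_single_of_mem (⟨(a : ℕ) + 1, by omega⟩ : Fin (k + 2))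
          (Finset.mem_univ _) ?_]
      · simp
      · intro b' _ hb'
        refine if_neg fun hc => hb' (Fin.ext ?_)
        simpa using hc.symm
    · rw [if_neg h, Finset.sum_eq_zero]
      intro a' _
      refine if_neg fun hc => ?_
      have := a'.isLt
      omega
  have hcount2 : (∑ a : Fin (k + 2), if (a : ℕ) < k + 1 then (1 : ℤ) else 0) = (k : ℤ) + 1 := by
    rw [Fin.sum_univ_eq_sum_range (fun i => if i < k + 1 then (1 : ℤ) else 0) (k + 2)]
    rw [Finset.sum_range_succ, if_neg (lt_irrefl _), add_zero]
    rw [Finset.sum_congr rfl fun i hi => if_pos (Finset.mem_range.mp hi)]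
    rw [Finset.sum_const, Finset.card_range]
    push_cast
    ring
  have hS2 : S = (∑ a : Fin (k + 2), interForm M (α a) (α a)) + 2 * ((k : ℤ) + 1) := by
    rw [hSdef, Finset.sum_congr rfl fun a _ => Finset.sum_congr rfl fun a' _ => hv a a']
    simp only [Finset.sum_add_distrib]
    have e1 : ∀ a : Fin (k + 2),
        (∑ a' : Fin (k + 2), if a = a' then interForm M (α a) (α a) else 0) =
        interForm M (α a) (α a) := by
      intro a
      simp
    have e2 : (∑ a : Fin (k + 2), ∑ a' : Fin (k + 2),
        if (a' : ℕ) + 1 = (a : ℕ) then (1 : ℤ) else 0) = (k : ℤ) + 1 := by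
      rw [Finset.sum_comm]
      rw [Finset.sum_congr rfl fun a' _ => hcount a']
      exact hcount2
    rw [Finset.sum_congr rfl fun a _ => e1 a,
      Finset.sum_congr rfl fun a _ => hcount a, hcount2, e2]
    ring
  -- diagonal terms
  have hdiag : (∑ a : Fin (k + 2), interForm M (α a) (α a)) =
      1 - ∑ a : Fin (k + 2), ∑ f : Fin M, (P a f + N a f) := by
    have e : ∀ a : Fin (k + 2), interForm M (α a) (α a) =
        L a - ∑ f : Fin M, (P a f + N a f) := by
      intro a
      rw [hform]
      congr 1
      · rw [hLdef]
        by_cases ha : a = 0 <;> simp [ha]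
      · exact Finset.sum_congr rfl fun f _ => hsq a f
    rw [Finset.sum_congr rfl fun a _ => e a, Finset.sum_sub_distrib, hsumL]
  -- total head count
  have hsumP : (∑ a : Fin (k + 2), ∑ f : Fin M, P a f) = (k : ℤ) + 1 := by
    have e : ∀ a : Fin (k + 2), (∑ f : Fin M, P a f) = 1 - L a := by
      intro a
      by_cases ha : a = 0
      · subst ha
        rw [hLdef]
        simp [hPdef, Phead]
      · rw [hPdef, hLdef]
        simp only [Phead, if_neg ha]
        simp [ha]
    rw [Finset.sum_congr rfl fun a _ => e a, Finset.sum_sub_distrib, hsumL,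
      Finset.sum_const, Finset.card_univ, Fintype.card_fin]
    push_cast
    ring
  -- assemble the key identity
  set t : Fin M → ℤ := fun f => ∑ a : Fin (k + 2), (P a f - N a f) with htdef
  have hsplitPN : (∑ a : Fin (k + 2), ∑ f : Fin M, (P a f + N a f)) =
      (∑ a : Fin (k + 2), ∑ f : Fin M, P a f) +
      (∑ a : Fin (k + 2), ∑ f : Fin M, N a f) := by
    simp only [Finset.sum_add_distrib]
  have hsumt : (∑ f : Fin M, t f) =
      (∑ a : Fin (k + 2), ∑ f : Fin M, P a f) -
      (∑ a : Fin (k + 2), ∑ f : Fin M, N a f) := by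
    rw [htdef]
    simp only [Finset.sum_sub_distrib]
    rw [Finset.sum_comm (f := fun f (a : Fin (k + 2)) => P a f),
      Finset.sum_comm (f := fun f (a : Fin (k + 2)) => N a f)]
  have key : (∑ f : Fin M, ((t f) ^ 2 + t f)) = 0 := by
    have h12 := hS1.symm.trans hS2
    rw [hdiag] at h12
    simp only [Finset.sum_add_distrib]
    have : (∑ f : Fin M, (t f) ^ 2) = ∑ f : Fin M, (∑ a : Fin (k + 2), (P a f - N a f)) ^ 2 :=
      rfl
    rw [this]
    rw [hsplitPN, hsumP] at h12
    rw [hsumt, hsumP]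
    linarith
  have hnonneg : ∀ f ∈ Finset.univ (α := Fin M), 0 ≤ (t f) ^ 2 + t f := by
    intro f _
    rcases le_or_gt 0 (t f) with h | h
    · positivity
    · have h' : t f ≤ -1 := by omega
      nlinarith
  have hall := (Finset.sum_eq_zero_iff_of_nonneg hnonneg).mp key
  -- now the conclusion
  intro i j hij x hx
  obtain ⟨hxi, hxj⟩ := hx
  have hNmem : ∀ a : Fin (k + 2), x ∈ A a → N a x = 1 := by
    intro a hxa
    by_cases ha : a = 0
    · subst ha
      rw [hA0] at hxa
      have hex : ∃ j, j < b 0 ∧ E 0 j = x := hxa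
      simp only [hNdef, Ntail, if_true]
      rw [if_pos hex]
    · rw [hAi a ha] at hxa
      have hex : ∃ j, 1 ≤ j ∧ j < b a ∧ E a j = x := hxa
      simp only [hNdef, Ntail]
      rw [if_neg ha, if_pos hex]
  have hNi : N i x = 1 := hNmem i hxi
  have hNj : N j x = 1 := hNmem j hxj
  have hijne : i ≠ j := ne_of_lt hij
  have hnn : (2 : ℤ) ≤ ∑ a : Fin (k + 2), N a x := by
    have e : (2 : ℤ) = ∑ a ∈ ({i, j} : Finset (Fin (k + 2))), N a x := by
      rw [Finset.sum_pair hijne, hNi, hNj]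
      norm_num
    rw [e]
    refine Finset.sum_le_sum_of_subset_of_nonneg (Finset.subset_univ _) ?_
    intro a _ _
    rcases hN01 a x with h | h <;> rw [h] <;> norm_num
  have htx : (t x) ^ 2 + t x = 0 := hall x (Finset.mem_univ x)
  have htx1 : -1 ≤ t x := by
    by_contra hcon
    push_neg at hcon
    have h2 : t x ≤ -2 := by omega
    nlinarith
  have htsub : t x = (∑ a : Fin (k + 2), P a x) - (∑ a : Fin (k + 2), N a x) := by
    rw [htdef]
    simp only [Finset.sum_sub_distrib]
  have hpp : (1 : ℤ) ≤ ∑ a : Fin (k + 2), P a x := by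
    rw [htsub] at htx1
    linarith
  have hex : ∃ a : Fin (k + 2), P a x ≠ 0 := by
    by_contra hcon
    push_neg at hcon
    rw [Finset.sum_eq_zero (fun a _ => hcon a)] at hpp
    norm_num at hpp
  obtain ⟨a, ha⟩ := hex
  simp only [hPdef, Phead] at ha
  by_cases ha0 : a = 0
  · rw [if_pos ha0] at ha
    exact absurd rfl ha
  · rw [if_neg ha0] at ha
    by_cases haE : E a 0 = x
    · exact ⟨a, ha0, haE⟩
    · rw [if_neg haE] at ha
      exact absurd rfl ha
end
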